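/- arXiv:funct-an/9506001 — 6 statements merged into one kernel-verified Lean document; each statement's English description precedes it below -/
import Mathlib

section
/- Let m ≥ 2 and let V ⊆ M_m be the digraph space of the m-cycle, i.e. the linear span of the standard matrix units e_{ii} (1 ≤ i ≤ m), e_{i,i+1} (1 ≤ i ≤ m−1), and e_{m,1}. Let φ : V → M_m be the Schur-product projection that deletes the (m,1) entry: φ is the linear map with φ(e_{m,1}) = 0 and φ(e) = e for every other spanning matrix unit (equivalently, φ(A) agrees with A except that the (m,1) entry is replaced by 0). Then the operator norm of the linear map φ satisfies ‖φ‖ ≥ cos(π/(2m+1)) / cos(π/(2m)); in particular ‖φ‖ > 1, so φ is not contractive. -/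
open Matrix

noncomputable section

/-- The operator norm of a complex matrix acting on `ℓ²`. -/
noncomputable def opNorm {ι : Type*} [Fintype ι] [DecidableEq ι] (A : Matrix ι ι ℂ) : ℝ :=
  ‖Matrix.toEuclideanCLM (𝕜 := ℂ) (n := ι) A‖

namespace SchurCycle

open scoped Matrix.Norms.L2Operator
open Finset

set_option linter.unusedSectionVars false

variable (m : ℕ) [NeZero m]

lemma opNorm_eq (A : Matrix (Fin m) (Fin m) ℂ) : opNorm A = ‖A‖ := rfl

/-- cyclic successor on `Fin m` -/
def nxt (i : Fin m) : Fin m :=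
  ⟨(i.val + 1) % m, Nat.mod_lt _ (Nat.pos_of_ne_zero (NeZero.ne m))⟩

lemma nxt_val_lt (i : Fin m) (h : i.val + 1 < m) : (nxt m i).val = i.val + 1 :=
  Nat.mod_eq_of_lt h

lemma nxt_val_eq (i : Fin m) (h : i.val + 1 = m) : (nxt m i).val = 0 := by
  simp [nxt, h]

def cc (i : Fin m) : ℂ := if i.val + 1 = m then -1 else 1
def dd (i : Fin m) : ℂ := if i.val + 1 = m then 0 else 1

def Umat : Matrix (Fin m) (Fin m) ℂ := ∑ i, Matrix.single i (nxt m i) (cc m i)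
def Nmat : Matrix (Fin m) (Fin m) ℂ := ∑ i, Matrix.single i (nxt m i) (dd m i)

lemma sum_std_apply (f : Fin m → Fin m) (g : Fin m → ℂ) (k l : Fin m) :
    (∑ i, Matrix.single i (f i) (g i)) k l = if f k = l then g k else 0 := by
  rw [Matrix.sum_apply]
  rw [Finset.sum_eq_single k]
  · simp [Matrix.single, Matrix.of_apply]
  · intro b _ hb
    simp [Matrix.single, Matrix.of_apply, hb]
  · intro h; exact absurd (Finset.mem_univ k) h

lemma Umat_apply (k l : Fin m) : Umat m k l = if nxt m k = l then cc m k else 0 :=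
  sum_std_apply m _ _ k l

lemma Nmat_apply (k l : Fin m) : Nmat m k l = if nxt m k = l then dd m k else 0 :=
  sum_std_apply m _ _ k l

def Amat : Matrix (Fin m) (Fin m) ℂ := 1 + Umat m
def Bmat : Matrix (Fin m) (Fin m) ℂ := 1 + Nmat m

/-- angle `(2j+1)π/m` -/
def theta (j : Fin m) : ℝ := (2 * (j : ℕ) + 1 : ℝ) * Real.pi / m

def zeta (j : Fin m) : ℂ := Complex.exp ((theta m j : ℂ) * Complex.I)

lemma zeta_pow_m (j : Fin m) : zeta m j ^ m = -1 := by
  have hm : (m : ℂ) ≠ 0 := Nat.cast_ne_zero.mpr (NeZero.ne m)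
  rw [zeta, ← Complex.exp_nat_mul]
  have h : (m : ℂ) * ((theta m j : ℂ) * Complex.I)
      = ((2 * (j : ℕ) + 1 : ℕ) : ℂ) * ((Real.pi : ℂ) * Complex.I) := by
    rw [theta]
    push_cast
    field_simp
  rw [h, Complex.exp_nat_mul, Complex.exp_pi_mul_I]
  exact Odd.neg_one_pow ⟨(j : ℕ), by ring⟩

def Wmat : Matrix (Fin m) (Fin m) ℂ :=
  Matrix.of fun k j => zeta m j ^ (k : ℕ) * (((Real.sqrt m)⁻¹ : ℝ) : ℂ)

lemma conj_zeta_mul_zeta (j j' : Fin m) :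
    (starRingEnd ℂ) (zeta m j) * zeta m j' =
      Complex.exp (((theta m j' - theta m j : ℝ) : ℂ) * Complex.I) := by
  rw [zeta, zeta, ← Complex.exp_conj, ← Complex.exp_add]
  congr 1
  have h : (starRingEnd ℂ) ((theta m j : ℂ) * Complex.I)
      = -((theta m j : ℂ) * Complex.I) := by
    rw [_root_.map_mul, Complex.conj_ofReal, Complex.conj_I]
    ring
  rw [h]
  push_cast
  ring

lemma WHW : (Wmat m)ᴴ * Wmat m = 1 := by
  have hm0 : 0 < m := Nat.pos_of_ne_zero (NeZero.ne m)
  have hmr : (0:ℝ) < m := by exact_mod_cast hm0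
  have hmc : (m : ℂ) ≠ 0 := Nat.cast_ne_zero.mpr (NeZero.ne m)
  ext j j'
  rw [Matrix.mul_apply]
  have hterm : ∀ k : Fin m,
      (Wmat m)ᴴ j k * Wmat m k j'
        = ((starRingEnd ℂ) (zeta m j) * zeta m j') ^ (k:ℕ) * ((m : ℂ))⁻¹ := by
    intro k
    rw [Matrix.conjTranspose_apply, Wmat]
    simp only [Matrix.of_apply, star_mul', map_pow, Complex.star_def, Complex.conj_ofReal]
    rw [mul_pow]
    have : ((((Real.sqrt m)⁻¹ : ℝ)) : ℂ) * (((Real.sqrt m)⁻¹ : ℝ) : ℂ) = ((m:ℂ))⁻¹ := by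
      rw [← Complex.ofReal_mul, ← Real.sqrt_inv, Real.mul_self_sqrt (by positivity)]
      push_cast
      ring
    calc ((starRingEnd ℂ) (zeta m j)) ^ (k:ℕ) * (((Real.sqrt m)⁻¹ : ℝ) : ℂ)
          * (zeta m j' ^ (k:ℕ) * (((Real.sqrt m)⁻¹ : ℝ) : ℂ))
        = ((starRingEnd ℂ) (zeta m j)) ^ (k:ℕ) * zeta m j' ^ (k:ℕ)
            * ((((Real.sqrt m)⁻¹ : ℝ) : ℂ) * (((Real.sqrt m)⁻¹ : ℝ) : ℂ)) := by ring
      _ = _ := by rw [this]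
  rw [Finset.sum_congr rfl fun k _ => hterm k, ← Finset.sum_mul]
  by_cases hjj : j = j'
  · subst hjj
    have h1 : (starRingEnd ℂ) (zeta m j) * zeta m j = 1 := by
      rw [conj_zeta_mul_zeta]
      simp
    simp [h1, Matrix.one_apply_eq, Finset.card_univ, hmc]
  · have hne : ((starRingEnd ℂ) (zeta m j) * zeta m j') ≠ 1 := by
      rw [conj_zeta_mul_zeta]
      intro hexp
      rw [Complex.exp_eq_one_iff] at hexp
      obtain ⟨n, hn⟩ := hexp
      have him := congrArg Complex.im hn
      simp [Complex.ofReal_mul, Complex.mul_im, Complex.ofReal_re, Complex.ofReal_im] at him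
      -- him : theta m j' - theta m j = n * (2 * π)
      have hθ : theta m j' - theta m j = (((j':ℕ) : ℝ) - ((j:ℕ) : ℝ)) * (2 * Real.pi) / m := by
        rw [theta, theta]
        field_simp
        ring
      rw [hθ] at him
      have h2 : (((j':ℕ):ℝ) - ((j:ℕ):ℝ)) * (2 * Real.pi) = (n * m) * (2 * Real.pi) := by
        have h3 := (div_eq_iff (ne_of_gt hmr)).mp him
        linear_combination h3
      have key : (((j':ℕ) : ℝ) - ((j:ℕ) : ℝ)) = n * m :=
        mul_right_cancel₀ (by positivity : (0:ℝ) < 2 * Real.pi).ne' h2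
      have keyZ : ((j':ℕ) : ℤ) - ((j:ℕ) : ℤ) = n * m := by
        exact_mod_cast key
      have hj := j.isLt
      have hj' := j'.isLt
      have hne' : ((j':ℕ) : ℤ) ≠ ((j:ℕ) : ℤ) := by
        intro h
        exact hjj (Fin.ext (by exact_mod_cast h.symm))
      rcases lt_trichotomy n 0 with hn0 | hn0 | hn0
      · nlinarith [keyZ, (show ((j':ℕ):ℤ) ≥ 0 by positivity), (show ((j:ℕ):ℤ) < m by exact_mod_cast hj), (show (n:ℤ) ≤ -1 by omega), (show (0:ℤ) < m by exact_mod_cast hm0)]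
      · rw [hn0] at keyZ; simp at keyZ; omega
      · nlinarith [keyZ, (show ((j:ℕ):ℤ) ≥ 0 by positivity), (show ((j':ℕ):ℤ) < m by exact_mod_cast hj'), (show (n:ℤ) ≥ 1 by omega), (show (0:ℤ) < m by exact_mod_cast hm0)]
    have hpow : ((starRingEnd ℂ) (zeta m j) * zeta m j') ^ m = 1 := by
      rw [conj_zeta_mul_zeta, ← Complex.exp_nat_mul]
      have hθ : theta m j' - theta m j = (((j':ℕ) : ℝ) - ((j:ℕ) : ℝ)) * (2 * Real.pi) / m := by
        rw [theta, theta]; field_simp; ring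
      have harg : (m:ℂ) * (((theta m j' - theta m j : ℝ)) * Complex.I)
          = (((j' : ℕ) : ℤ) - ((j : ℕ) : ℤ) : ℤ) * (2 * (Real.pi:ℂ) * Complex.I) := by
        rw [hθ]
        have hmr' : ((m:ℝ):ℂ) ≠ 0 := by exact_mod_cast hmc
        push_cast
        field_simp
      rw [harg, Complex.exp_int_mul_two_pi_mul_I]
    have hsum : ∑ k : Fin m, ((starRingEnd ℂ) (zeta m j) * zeta m j') ^ (k:ℕ) = 0 := by
      rw [Fin.sum_univ_eq_sum_range]
      rw [geom_sum_eq hne]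
      rw [hpow]
      simp
    rw [hsum, zero_mul, Matrix.one_apply_ne hjj]

lemma U_mul_W : Umat m * Wmat m = Wmat m * Matrix.diagonal (zeta m) := by
  ext k j
  rw [Matrix.mul_apply, Matrix.mul_diagonal]
  have hsum : ∀ l : Fin m, Umat m k l * Wmat m l j
      = if nxt m k = l then cc m k * Wmat m l j else 0 := by
    intro l
    rw [Umat_apply]
    split <;> simp
  rw [Finset.sum_congr rfl fun l _ => hsum l, Finset.sum_ite_eq Finset.univ (nxt m k)
    (fun l => cc m k * Wmat m l j), if_pos (Finset.mem_univ _)]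
  simp only [Wmat, Matrix.of_apply]
  by_cases h : k.val + 1 = m
  · rw [nxt_val_eq m k h, cc]
    rw [if_pos h, pow_zero]
    have : zeta m j ^ (k : ℕ) * (((Real.sqrt m)⁻¹ : ℝ) : ℂ) * zeta m j
        = zeta m j ^ ((k:ℕ) + 1) * (((Real.sqrt m)⁻¹ : ℝ) : ℂ) := by
      rw [pow_succ]; ring
    rw [this, h, zeta_pow_m]
    ring
  · rw [nxt_val_lt m k (by omega), cc, if_neg h, pow_succ]
    ring

lemma W_mul_WH : Wmat m * (Wmat m)ᴴ = 1 :=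
  mul_eq_one_comm.mp (WHW m)

lemma A_eq : Amat m = Wmat m * (1 + Matrix.diagonal (zeta m)) * (Wmat m)ᴴ := by
  rw [Matrix.mul_add, Matrix.mul_one, ← U_mul_W, Matrix.add_mul, W_mul_WH,
    Matrix.mul_assoc, W_mul_WH, Matrix.mul_one, Amat]

lemma norm_W : ‖Wmat m‖ = 1 := by
  haveI : Nonempty (Fin m) := ⟨⟨0, Nat.pos_of_ne_zero (NeZero.ne m)⟩⟩
  have h1 : ‖Wmat m‖ * ‖Wmat m‖ = 1 := by
    rw [← Matrix.l2_opNorm_conjTranspose_mul_self, WHW, norm_one]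
  nlinarith [norm_nonneg (Wmat m)]

lemma coord_norm_le (x : EuclideanSpace ℂ (Fin m)) (i : Fin m) : ‖x i‖ ≤ ‖x‖ := by
  rw [EuclideanSpace.norm_eq]
  rw [show ‖x i‖ = Real.sqrt (‖x i‖ ^ 2) from (Real.sqrt_sq (norm_nonneg _)).symm]
  apply Real.sqrt_le_sqrt
  exact Finset.single_le_sum (f := fun i => ‖x i‖ ^ 2) (fun _ _ => sq_nonneg _)
    (Finset.mem_univ i)

lemma clm_apply_coord (M : Matrix (Fin m) (Fin m) ℂ) (x : EuclideanSpace ℂ (Fin m)) (k : Fin m) :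
    ((Matrix.toEuclideanLin (𝕜 := ℂ) (m := Fin m) (n := Fin m)).trans
      LinearMap.toContinuousLinearMap M) x k = (M *ᵥ (x : Fin m → ℂ)) k := rfl

lemma norm_diag_le (d : Fin m → ℂ) {r : ℝ} (hr : 0 ≤ r) (h : ∀ j, ‖d j‖ ≤ r) :
    ‖Matrix.diagonal d‖ ≤ r := by
  rw [Matrix.l2_opNorm_def]
  apply ContinuousLinearMap.opNorm_le_bound _ hr
  intro x
  rw [EuclideanSpace.norm_eq, EuclideanSpace.norm_eq]
  have hcoord : ∀ k, ‖((Matrix.toEuclideanLin (𝕜 := ℂ) (m := Fin m) (n := Fin m)).trans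
      LinearMap.toContinuousLinearMap (Matrix.diagonal d)) x k‖ = ‖d k * x k‖ := by
    intro k
    rw [clm_apply_coord, Matrix.mulVec_diagonal]
  calc Real.sqrt (∑ k, ‖((Matrix.toEuclideanLin (𝕜 := ℂ) (m := Fin m) (n := Fin m)).trans
        LinearMap.toContinuousLinearMap (Matrix.diagonal d)) x k‖ ^ 2)
      ≤ Real.sqrt (∑ k, r ^ 2 * ‖x k‖ ^ 2) := by
        apply Real.sqrt_le_sqrt
        apply Finset.sum_le_sum
        intro k _
        rw [hcoord k, norm_mul, mul_pow]
        exact mul_le_mul_of_nonneg_right (pow_le_pow_left₀ (norm_nonneg _) (h k) 2) (sq_nonneg _)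
    _ = r * Real.sqrt (∑ k, ‖x k‖ ^ 2) := by
        rw [← Finset.mul_sum, Real.sqrt_mul (sq_nonneg r), Real.sqrt_sq hr]

lemma cos_pos_2m (hm : 2 ≤ m) : 0 < Real.cos (Real.pi / (2 * (m:ℝ))) := by
  have hmr : (2:ℝ) ≤ m := by exact_mod_cast hm
  have hpi := Real.pi_pos
  apply Real.cos_pos_of_mem_Ioo
  constructor
  · have : 0 < Real.pi / (2 * (m:ℝ)) := by positivity
    linarith
  · rw [div_lt_div_iff₀ (by linarith) (by norm_num)]
    nlinarith

lemma one_add_zeta_norm (hm : 2 ≤ m) (j : Fin m) :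
    ‖1 + zeta m j‖ ≤ 2 * Real.cos (Real.pi / (2 * (m:ℝ))) := by
  have hmr : (2:ℝ) ≤ m := by exact_mod_cast hm
  have hm0 : (0:ℝ) < m := by linarith
  have hpi := Real.pi_pos
  have hsq : ‖1 + zeta m j‖ ^ 2 = 2 + 2 * Real.cos (theta m j) := by
    rw [zeta, Complex.exp_mul_I]
    rw [← Complex.ofReal_cos, ← Complex.ofReal_sin]
    rw [Complex.sq_norm, Complex.normSq_apply]
    simp only [Complex.add_re, Complex.add_im, Complex.one_re, Complex.one_im,
      Complex.mul_re, Complex.mul_im, Complex.ofReal_re, Complex.ofReal_im,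
      Complex.I_re, Complex.I_im]
    nlinarith [Real.sin_sq_add_cos_sq (theta m j)]
  have hcosle : Real.cos (theta m j) ≤ Real.cos (Real.pi / (m:ℝ)) := by
    have hj1 : (1:ℝ) ≤ 2 * ((j:ℕ):ℝ) + 1 := by
      have : (0:ℝ) ≤ ((j:ℕ):ℝ) := by positivity
      linarith
    have hj2 : 2 * ((j:ℕ):ℝ) + 1 ≤ 2 * (m:ℝ) - 1 := by
      have := j.isLt
      have : ((j:ℕ):ℝ) ≤ (m:ℝ) - 1 := by
        have : ((j:ℕ):ℝ) < (m:ℝ) := by exact_mod_cast j.isLt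
        have : ((j:ℕ):ℝ) + 1 ≤ (m:ℝ) := by
          exact_mod_cast Nat.succ_le_of_lt j.isLt
        linarith
      linarith
    have hθlo : Real.pi / (m:ℝ) ≤ theta m j := by
      rw [theta, div_le_div_iff₀ hm0 hm0]
      nlinarith [mul_le_mul_of_nonneg_right hj1 (le_of_lt (mul_pos hpi hm0))]
    rcases le_or_gt (theta m j) Real.pi with h | h
    · exact Real.cos_le_cos_of_nonneg_of_le_pi (by positivity) h hθlo
    · have h1 : Real.cos (theta m j) = Real.cos (2 * Real.pi - theta m j) := by
        rw [Real.cos_sub, Real.cos_two_pi, Real.sin_two_pi]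
        ring
      rw [h1]
      apply Real.cos_le_cos_of_nonneg_of_le_pi (by positivity)
      · linarith
      · rw [theta]
        rw [le_sub_iff_add_le, ← add_div, div_le_iff₀ hm0]
        nlinarith
  have hc2sq : (2 * Real.cos (Real.pi / (2 * (m:ℝ)))) ^ 2 = 2 + 2 * Real.cos (Real.pi / (m:ℝ)) := by
    rw [mul_pow, Real.cos_sq]
    rw [show 2 * (Real.pi / (2 * (m:ℝ))) = Real.pi / (m:ℝ) by field_simp]
    ring
  have hcpos := cos_pos_2m m hm
  nlinarith [norm_nonneg (1 + zeta m j)]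

lemma norm_A_le (hm : 2 ≤ m) : ‖Amat m‖ ≤ 2 * Real.cos (Real.pi / (2 * (m:ℝ))) := by
  have hb : (0:ℝ) ≤ 2 * Real.cos (Real.pi / (2 * (m:ℝ))) := by
    have := cos_pos_2m m hm
    linarith
  rw [A_eq]
  calc ‖Wmat m * (1 + Matrix.diagonal (zeta m)) * (Wmat m)ᴴ‖
      ≤ ‖Wmat m * (1 + Matrix.diagonal (zeta m))‖ * ‖(Wmat m)ᴴ‖ := Matrix.l2_opNorm_mul _ _
    _ ≤ ‖Wmat m‖ * ‖1 + Matrix.diagonal (zeta m)‖ * ‖(Wmat m)ᴴ‖ := by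
        apply mul_le_mul_of_nonneg_right (Matrix.l2_opNorm_mul _ _) (norm_nonneg _)
    _ = ‖1 + Matrix.diagonal (zeta m)‖ := by
        rw [Matrix.l2_opNorm_conjTranspose, norm_W]
        ring
    _ ≤ 2 * Real.cos (Real.pi / (2 * (m:ℝ))) := by
        rw [show (1 : Matrix (Fin m) (Fin m) ℂ) + Matrix.diagonal (zeta m)
            = Matrix.diagonal (fun j => 1 + zeta m j) by
          rw [← Matrix.diagonal_one, Matrix.diagonal_add]]
        exact norm_diag_le m _ hb (one_add_zeta_norm m hm)

lemma norm_B_lower (hm : 2 ≤ m) :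
    2 * Real.cos (Real.pi / (2 * (m:ℝ) + 1)) ≤ ‖Bmat m‖ := by
  have hmr : (2:ℝ) ≤ m := by exact_mod_cast hm
  have hm0 : (0:ℝ) < m := by linarith
  have hpi := Real.pi_pos
  set t : ℝ := Real.pi / (2 * (m:ℝ) + 1) with ht
  have hden : (0:ℝ) < 2 * (m:ℝ) + 1 := by linarith
  have hπ : (2 * (m:ℝ) + 1) * t = Real.pi := by
    rw [ht]; field_simp
  have htpos : 0 < t := by rw [ht]; positivity
  have htlt : t < Real.pi / 2 := by
    rw [ht, div_lt_div_iff₀ hden (by norm_num)]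
    nlinarith
  have hcos : 0 < Real.cos t := Real.cos_pos_of_mem_Ioo ⟨by linarith, htlt⟩
  set f : Fin m → ℂ := fun k => ((Real.sin ((2 * ((k:ℕ):ℝ) + 1) * t) : ℝ) : ℂ) with hf
  set x : EuclideanSpace ℂ (Fin m) := (WithLp.equiv 2 (Fin m → ℂ)).symm f with hx
  have hxc : ∀ k, x k = f k := fun k => rfl
  -- compute B *ᵥ x
  have hBx : ∀ k : Fin m, (Bmat m *ᵥ (x : Fin m → ℂ)) k
      = ((2 * Real.cos t * Real.sin ((2 * ((k:ℕ):ℝ) + 2) * t) : ℝ) : ℂ) := by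
    intro k
    have h1 : (Bmat m *ᵥ (x : Fin m → ℂ)) k = x k + ∑ l, Nmat m k l * x l := by
      rw [Bmat, Matrix.add_mulVec, Matrix.one_mulVec]
      rfl
    have h2 : ∑ l, Nmat m k l * x l = dd m k * x (nxt m k) := by
      have : ∀ l, Nmat m k l * x l = if nxt m k = l then dd m k * x l else 0 := by
        intro l; rw [Nmat_apply]; split <;> simp
      rw [Finset.sum_congr rfl fun l _ => this l,
        Finset.sum_ite_eq Finset.univ (nxt m k) (fun l => dd m k * x l),
        if_pos (Finset.mem_univ _)]
    rw [h1, h2]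
    by_cases h : k.val + 1 = m
    · rw [dd, if_pos h, zero_mul, add_zero, hxc, hf]
      simp only
      have hk : ((k:ℕ):ℝ) = (m:ℝ) - 1 := by
        have : ((k:ℕ):ℝ) + 1 = (m:ℝ) := by exact_mod_cast h
        linarith
      have e1 : (2 * ((k:ℕ):ℝ) + 1) * t = Real.pi - 2 * t := by
        rw [hk]; linarith [hπ]
      have e2 : (2 * ((k:ℕ):ℝ) + 2) * t = Real.pi - t := by
        rw [hk]; linarith [hπ]
      exact Complex.ofReal_inj.mpr (by
        rw [e1, e2, Real.sin_pi_sub, Real.sin_pi_sub, Real.sin_two_mul]; ring)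
    · have hlt : k.val + 1 < m := by omega
      rw [dd, if_neg h, one_mul, hxc, hxc, hf]
      simp only
      have hnv : (((nxt m k : Fin m):ℕ):ℝ) = ((k:ℕ):ℝ) + 1 := by
        rw [nxt_val_lt m k hlt]; push_cast; ring
      rw [hnv, ← Complex.ofReal_add]
      exact Complex.ofReal_inj.mpr (by
        have e1 : (2 * ((k:ℕ):ℝ) + 1) * t = (2 * ((k:ℕ):ℝ) + 2) * t - t := by ring
        have e2 : (2 * (((k:ℕ):ℝ) + 1) + 1) * t = (2 * ((k:ℕ):ℝ) + 2) * t + t := by ring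
        rw [e1, e2, Real.sin_add, Real.sin_sub]; ring)
  -- the two sums of squares agree
  have hsum : ∑ k : Fin m, Real.sin ((2 * ((k:ℕ):ℝ) + 2) * t) ^ 2
      = ∑ k : Fin m, Real.sin ((2 * ((k:ℕ):ℝ) + 1) * t) ^ 2 := by
    have hrev : ∀ k : Fin m,
        Real.sin ((2 * ((k:ℕ):ℝ) + 2) * t) ^ 2
          = (fun i : Fin m => Real.sin ((2 * ((i:ℕ):ℝ) + 1) * t) ^ 2) (Fin.rev k) := by
      intro k
      simp only
      have hvr : (((Fin.rev k : Fin m):ℕ):ℝ) = (m:ℝ) - 1 - ((k:ℕ):ℝ) := by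
        have h1 : (Fin.rev k : Fin m).val = m - (k.val + 1) := Fin.val_rev k
        have h2 : k.val + 1 ≤ m := k.isLt
        rw [h1]
        push_cast [Nat.cast_sub h2]
        ring
      rw [hvr]
      have e : (2 * ((m:ℝ) - 1 - ((k:ℕ):ℝ)) + 1) * t = Real.pi - (2 * ((k:ℕ):ℝ) + 2) * t := by
        linarith [hπ]
      rw [e, Real.sin_pi_sub]
    rw [Finset.sum_congr rfl fun k _ => hrev k]
    exact Fintype.sum_equiv (Fin.revPerm) _ _ (fun k => rfl)
  -- norms
  have hxnorm : ‖x‖ = Real.sqrt (∑ k : Fin m, Real.sin ((2 * ((k:ℕ):ℝ) + 1) * t) ^ 2) := by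
    rw [EuclideanSpace.norm_eq]
    congr 1
    apply Finset.sum_congr rfl
    intro k _
    rw [hxc, hf]
    simp only
    rw [Complex.norm_real, Real.norm_eq_abs, sq_abs]
  have hBxnorm : ‖(EuclideanSpace.equiv (Fin m) ℂ).symm (Bmat m *ᵥ (x : Fin m → ℂ))‖
      = 2 * Real.cos t * Real.sqrt (∑ k : Fin m, Real.sin ((2 * ((k:ℕ):ℝ) + 1) * t) ^ 2) := by
    rw [EuclideanSpace.norm_eq]
    have hco : ∀ k : Fin m, ‖((EuclideanSpace.equiv (Fin m) ℂ).symm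
        (Bmat m *ᵥ (x : Fin m → ℂ))) k‖ ^ 2
        = (2 * Real.cos t) ^ 2 * Real.sin ((2 * ((k:ℕ):ℝ) + 2) * t) ^ 2 := by
      intro k
      have : ((EuclideanSpace.equiv (Fin m) ℂ).symm (Bmat m *ᵥ (x : Fin m → ℂ))) k
          = (Bmat m *ᵥ (x : Fin m → ℂ)) k := rfl
      rw [this, hBx k, Complex.norm_real, Real.norm_eq_abs, sq_abs]
      ring
    rw [Finset.sum_congr rfl fun k _ => hco k, ← Finset.mul_sum, hsum,
      Real.sqrt_mul (sq_nonneg _), Real.sqrt_sq (by positivity)]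
  have key := Matrix.l2_opNorm_mulVec (Bmat m) x
  rw [hBxnorm, hxnorm] at key
  have hxpos : 0 < Real.sqrt (∑ k : Fin m, Real.sin ((2 * ((k:ℕ):ℝ) + 1) * t) ^ 2) := by
    apply Real.sqrt_pos.mpr
    apply Finset.sum_pos'
    · intro k _; exact sq_nonneg _
    · refine ⟨⟨0, by omega⟩, Finset.mem_univ _, ?_⟩
      have h0 : (2 * (((⟨0, by omega⟩ : Fin m):ℕ):ℝ) + 1) * t = t := by
        norm_num
      rw [h0]
      have := Real.sin_pos_of_pos_of_lt_pi htpos (by linarith)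
      positivity
  exact le_of_mul_le_mul_right key hxpos

lemma entry_norm_le (X : Matrix (Fin m) (Fin m) ℂ) (k l : Fin m) : ‖X k l‖ ≤ ‖X‖ := by
  have h := Matrix.l2_opNorm_mulVec X (EuclideanSpace.single l 1)
  rw [EuclideanSpace.norm_single, norm_one, mul_one] at h
  refine le_trans ?_ h
  have hc : ((EuclideanSpace.equiv (Fin m) ℂ).symm
      (X *ᵥ (EuclideanSpace.single l 1 : EuclideanSpace ℂ (Fin m)))) k = X k l := by
    show (X *ᵥ ((EuclideanSpace.single l 1 : EuclideanSpace ℂ (Fin m)) : Fin m → ℂ)) k = X k l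
    have : ∀ j, X k j * (EuclideanSpace.single l (1:ℂ)) j
        = if l = j then X k j else 0 := by
      intro j
      rw [EuclideanSpace.single_apply]
      by_cases hj : j = l
      · subst hj; simp
      · rw [if_neg hj, if_neg (fun hh => hj hh.symm), mul_zero]
    calc (X *ᵥ ((EuclideanSpace.single l 1 : EuclideanSpace ℂ (Fin m)) : Fin m → ℂ)) k
        = ∑ j, X k j * (EuclideanSpace.single l (1:ℂ)) j := rfl
      _ = ∑ j, if l = j then X k j else 0 := Finset.sum_congr rfl fun j _ => this j
      _ = X k l := by rw [Finset.sum_ite_eq Finset.univ l (fun j => X k j),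
            if_pos (Finset.mem_univ _)]
  rw [← hc]
  exact coord_norm_le m _ k

lemma std_norm_le (i j : Fin m) : ‖Matrix.single i j (1:ℂ)‖ ≤ 1 := by
  rw [Matrix.l2_opNorm_def]
  apply ContinuousLinearMap.opNorm_le_bound _ zero_le_one
  intro x
  rw [one_mul, EuclideanSpace.norm_eq]
  have hco : ∀ k, ‖((Matrix.toEuclideanLin (𝕜 := ℂ) (m := Fin m) (n := Fin m)).trans
      LinearMap.toContinuousLinearMap (Matrix.single i j (1:ℂ))) x k‖ ^ 2
      = if i = k then ‖x j‖ ^ 2 else 0 := by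
    intro k
    rw [clm_apply_coord]
    have : (Matrix.single i j (1:ℂ) *ᵥ (x : Fin m → ℂ)) k
        = ∑ l, (if i = k ∧ j = l then (1:ℂ) else 0) * x l := rfl
    rw [this]
    by_cases hik : i = k
    · subst hik
      simp only [true_and, if_pos rfl]
      have : ∀ l, (if j = l then (1:ℂ) else 0) * x l = if j = l then x l else 0 := by
        intro l; split <;> simp
      rw [Finset.sum_congr rfl fun l _ => this l,
        Finset.sum_ite_eq Finset.univ j (fun l => x l), if_pos (Finset.mem_univ _), if_true]
    · simp only [hik, false_and, if_false, zero_mul]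
      simp
  rw [Finset.sum_congr rfl fun k _ => hco k, Finset.sum_ite_eq Finset.univ i
    (fun _ => ‖x j‖ ^ 2), if_pos (Finset.mem_univ _)]
  rw [Real.sqrt_sq (norm_nonneg _)]
  exact coord_norm_le m x j

end SchurCycle

open scoped Matrix.Norms.L2Operator in
open SchurCycle in
/-- The Schur-product projection deleting the `(m,1)` entry of the digraph space
of the `m`-cycle has norm at least `cos (π/(2m+1)) / cos (π/(2m))`; in particular it is not
contractive. -/
theorem schur_deletion_on_cycle_not_contractive (m : ℕ) (hm : 2 ≤ m)
    (V : Submodule ℂ (Matrix (Fin m) (Fin m) ℂ))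
    (hV : V = Submodule.span ℂ
      {A : Matrix (Fin m) (Fin m) ℂ |
        (∃ i : Fin m, A = Matrix.single i i 1) ∨
        (∃ i j : Fin m, (i : ℕ) + 1 = (j : ℕ) ∧ A = Matrix.single i j 1) ∨
        A = Matrix.single (⟨m - 1, by omega⟩ : Fin m) (⟨0, by omega⟩ : Fin m) 1})
    (φ : Matrix (Fin m) (Fin m) ℂ →ₗ[ℂ] Matrix (Fin m) (Fin m) ℂ)
    (hφ : ∀ A ∈ V, ∀ k l : Fin m,
      φ A k l = if (k : ℕ) = m - 1 ∧ (l : ℕ) = 0 then 0 else A k l) :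
    Real.cos (Real.pi / (2 * (m : ℝ) + 1)) / Real.cos (Real.pi / (2 * (m : ℝ))) ≤
      sSup {r : ℝ | ∃ a ∈ V, opNorm a ≤ 1 ∧ r = opNorm (φ a)} ∧
    ¬ (∀ a ∈ V, opNorm (φ a) ≤ opNorm a) := by
  haveI : NeZero m := ⟨by omega⟩
  classical
  have hmr : (2:ℝ) ≤ m := by exact_mod_cast hm
  have hpi := Real.pi_pos
  set c₁ := Real.cos (Real.pi / (2 * (m:ℝ) + 1)) with hc₁def
  set c₂ := Real.cos (Real.pi / (2 * (m:ℝ))) with hc₂def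
  have hc2 : 0 < c₂ := cos_pos_2m m hm
  have hc1 : c₂ < c₁ := by
    rw [hc₁def, hc₂def]
    apply Real.cos_lt_cos_of_nonneg_of_le_pi
    · positivity
    · calc Real.pi / (2 * (m:ℝ)) ≤ Real.pi / 1 := by
            apply div_le_div_of_nonneg_left hpi.le one_pos
            linarith
        _ = Real.pi := by ring
    · apply div_lt_div_of_pos_left hpi (by linarith)
      linarith
  have hc1pos : 0 < c₁ := lt_trans hc2 hc1
  set z : ℂ := (((2 * c₂)⁻¹ : ℝ) : ℂ) with hzdef
  set a : Matrix (Fin m) (Fin m) ℂ := z • Amat m with hadef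
  -- membership of Amat in V
  have h1sum : (1 : Matrix (Fin m) (Fin m) ℂ) = ∑ i : Fin m, Matrix.single i i (1:ℂ) := by
    ext k l
    rw [Matrix.one_apply, Matrix.sum_apply]
    simp only [Matrix.single, Matrix.of_apply]
    by_cases h : k = l
    · subst h
      rw [Finset.sum_eq_single k]
      · simp
      · intro b _ hb; rw [if_neg]; rintro ⟨rfl, -⟩; exact hb rfl
      · intro h; exact absurd (Finset.mem_univ k) h
    · rw [if_neg h, Finset.sum_eq_zero]
      intro i _
      rw [if_neg]
      rintro ⟨rfl, rfl⟩
      exact h rfl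
  have hAV : Amat m ∈ V := by
    rw [hV]
    rw [Amat, Umat]
    apply Submodule.add_mem
    · rw [h1sum]
      apply Submodule.sum_mem
      intro i _
      exact Submodule.subset_span (Or.inl ⟨i, rfl⟩)
    · apply Submodule.sum_mem
      intro i _
      have hsm : Matrix.single i (nxt m i) (cc m i)
          = cc m i • Matrix.single i (nxt m i) (1:ℂ) := by
        rw [Matrix.smul_single, smul_eq_mul, mul_one]
      rw [hsm]
      apply Submodule.smul_mem
      apply Submodule.subset_span
      by_cases h : i.val + 1 = m
      · refine Or.inr (Or.inr ?_)
        have hi : i = (⟨m - 1, by omega⟩ : Fin m) := by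
          apply Fin.ext
          show i.val = m - 1
          omega
        have hn : nxt m i = (⟨0, by omega⟩ : Fin m) := by
          apply Fin.ext
          show (nxt m i).val = 0
          rw [nxt_val_eq m i h]
        rw [hn]
        exact congrArg (fun u => Matrix.single u (⟨0, by omega⟩ : Fin m) (1:ℂ)) hi
      · refine Or.inr (Or.inl ⟨i, nxt m i, ?_, rfl⟩)
        rw [nxt_val_lt m i (by omega)]
  have haV : a ∈ V := Submodule.smul_mem V z hAV
  have hza : ‖z‖ = (2 * c₂)⁻¹ := by
    rw [hzdef, Complex.norm_real, Real.norm_eq_abs, abs_of_pos (by positivity)]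
  have hA1 : opNorm a ≤ 1 := by
    rw [hadef, opNorm_eq, norm_smul, hza]
    have hAle := norm_A_le m hm
    calc (2 * c₂)⁻¹ * ‖Amat m‖ ≤ (2 * c₂)⁻¹ * (2 * c₂) :=
          mul_le_mul_of_nonneg_left hAle (by positivity)
      _ = 1 := by field_simp
  have hφa : φ a = z • Bmat m := by
    ext k l
    rw [hφ a haV k l]
    by_cases hcor : (k:ℕ) = m - 1 ∧ (l:ℕ) = 0
    · rw [if_pos hcor]
      have hkl : Bmat m k l = 0 := by
        have hk : k.val + 1 = m := by omega
        have hne : k ≠ l := by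
          intro hh
          rw [hh] at hk
          omega
        rw [Bmat, Matrix.add_apply, Matrix.one_apply_ne hne, Nmat_apply]
        by_cases h1 : nxt m k = l
        · rw [if_pos h1, dd, if_pos hk]; ring
        · rw [if_neg h1]; ring
      rw [Matrix.smul_apply, hkl, smul_zero]
    · rw [if_neg hcor, hadef, Matrix.smul_apply, Matrix.smul_apply]
      congr 1
      rw [Amat, Bmat, Matrix.add_apply, Matrix.add_apply, Umat_apply, Nmat_apply]
      congr 1
      by_cases h1 : nxt m k = l
      · rw [if_pos h1, if_pos h1, cc, dd]
        by_cases h2 : k.val + 1 = m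
        · exfalso
          apply hcor
          have hl0 : (l:ℕ) = 0 := by
            rw [← h1, nxt_val_eq m k h2]
          exact ⟨by omega, hl0⟩
        · rw [if_neg h2, if_neg h2]
      · rw [if_neg h1, if_neg h1]
  have hlow : c₁ / c₂ ≤ opNorm (φ a) := by
    rw [hφa, opNorm_eq, norm_smul, hza]
    have hB := norm_B_lower m hm
    calc c₁ / c₂ = (2 * c₂)⁻¹ * (2 * c₁) := by field_simp
      _ ≤ (2 * c₂)⁻¹ * ‖Bmat m‖ := mul_le_mul_of_nonneg_left hB (by positivity)
  have hbdd : BddAbove {r : ℝ | ∃ b ∈ V, opNorm b ≤ 1 ∧ r = opNorm (φ b)} := by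
    refine ⟨2, ?_⟩
    rintro r ⟨b, hbV, hb1, rfl⟩
    have hm1 : m - 1 < m := by omega
    have hm0 : 0 < m := by omega
    set km : Fin m := ⟨m - 1, hm1⟩ with hkm
    set k0 : Fin m := ⟨0, hm0⟩ with hk0
    have hfb : φ b = b + (-(b km k0)) • Matrix.single km k0 (1:ℂ) := by
      ext k l
      rw [hφ b hbV k l, Matrix.add_apply, Matrix.smul_apply]
      have hE : Matrix.single km k0 (1:ℂ) k l
          = if km = k ∧ k0 = l then (1:ℂ) else 0 := rfl
      rw [hE]
      by_cases hc : (k:ℕ) = m - 1 ∧ (l:ℕ) = 0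
      · have hk : km = k := by
          apply Fin.ext
          show m - 1 = (k:ℕ)
          omega
        have hl : k0 = l := by
          apply Fin.ext
          show 0 = (l:ℕ)
          omega
        rw [if_pos hc, if_pos ⟨hk, hl⟩, hk, hl]
        simp
      · rw [if_neg hc, if_neg, smul_zero, add_zero]
        rintro ⟨hk, hl⟩
        apply hc
        constructor
        · rw [← hk]
        · rw [← hl]
    rw [opNorm_eq, hfb]
    have h1 : ‖b‖ ≤ 1 := by rw [← opNorm_eq]; exact hb1
    have h2 : ‖b km k0‖ ≤ ‖b‖ := entry_norm_le m b km k0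
    have h3 := std_norm_le m km k0
    calc ‖b + (-(b km k0)) • Matrix.single km k0 (1:ℂ)‖
        ≤ ‖b‖ + ‖(-(b km k0)) • Matrix.single km k0 (1:ℂ)‖ := norm_add_le _ _
      _ = ‖b‖ + ‖b km k0‖ * ‖Matrix.single km k0 (1:ℂ)‖ := by
          rw [norm_smul, norm_neg]
      _ ≤ 1 + 1 * 1 := by
          have h4 : ‖b km k0‖ ≤ 1 := le_trans h2 h1
          have h5 : ‖b km k0‖ * ‖Matrix.single km k0 (1:ℂ)‖ ≤ 1 * 1 :=
            mul_le_mul h4 h3 (norm_nonneg _) zero_le_one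
          linarith
      _ ≤ 2 := by norm_num
  constructor
  · exact le_trans hlow (le_csSup hbdd ⟨a, haV, hA1, rfl⟩)
  · intro hcon
    have h1 := hcon a haV
    have h2 : (1:ℝ) < c₁ / c₂ := (one_lt_div hc2).mpr hc1
    linarith
end
end

section
/- Let m ≥ 2 and let A ∈ M_m be the matrix with A_{ii} = 1 for 1 ≤ i ≤ m, A_{i,i+1} = 1 for 1 ≤ i ≤ m−1, A_{m,1} = −1, and all other entries 0. Then the operator norm of A equals 2 cos(π/(2m)). -/
open Matrix
open Fin.NatCast

noncomputable section

open Real Complex in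
private lemma aux_abs_one' {m : ℕ} (hm : 1 ≤ m) {w : ℂ} (hw : w ^ m = -1) : ‖w‖ = 1 := by
  have h : ‖w‖ ^ m = 1 := by
    rw [← norm_pow, hw]; simp
  rcases pow_eq_one_iff_cases.mp h with h | h | h
  · omega
  · exact h
  · exfalso; nlinarith [norm_nonneg w, h.1]

open Real Complex in
private lemma aux_re_le' {m : ℕ} (hm : 1 ≤ m) {w : ℂ} (hw : w ^ m = -1) :
    w.re ≤ Real.cos (π / m) := by
  have habs := aux_abs_one' hm hw
  set θ := w.arg with hθ
  have hw' : Complex.exp (θ * I) = w := by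
    have := Complex.norm_mul_exp_arg_mul_I w
    rwa [habs, Complex.ofReal_one, one_mul] at this
  have hexp : Complex.exp ((m : ℂ) * (θ * I)) = Complex.exp (π * I) := by
    rw [show ((m:ℂ) * (θ * I)) = m * (θ * I) from rfl, Complex.exp_nat_mul, hw', hw,
      Complex.exp_pi_mul_I]
  obtain ⟨n, hn⟩ := Complex.exp_eq_exp_iff_exists_int.mp hexp
  have hreal : (m : ℝ) * θ = π + n * (2 * π) := by
    have h2 : (((m : ℝ) * θ : ℝ) : ℂ) * I = ((π + n * (2 * π) : ℝ) : ℂ) * I := by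
      push_cast
      rw [mul_assoc, hn]; ring
    have h3 := mul_right_cancel₀ Complex.I_ne_zero h2
    exact_mod_cast h3
  have hm0 : (0:ℝ) < m := by exact_mod_cast hm
  have hodd : (1:ℝ) ≤ |1 + 2 * (n:ℝ)| := by
    have h5 : (1 + 2*n : ℤ) ≠ 0 := by omega
    have h6 := Int.one_le_abs h5
    calc (1:ℝ) ≤ |(1 + 2*n : ℤ)| := by exact_mod_cast h6
      _ = |1 + 2 * (n:ℝ)| := by push_cast; ring_nf
  have hθabs : π / m ≤ |θ| := by
    have h7 : |(m:ℝ) * θ| = π * |1 + 2*(n:ℝ)| := by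
      rw [hreal, show π + (n:ℝ) * (2 * π) = π * (1 + 2*n) by ring, abs_mul,
        abs_of_pos pi_pos]
    have h4 : π ≤ (m:ℝ) * |θ| := by
      rw [abs_mul, abs_of_pos hm0] at h7
      nlinarith [pi_pos]
    rw [div_le_iff₀ hm0]; linarith [mul_comm (m:ℝ) |θ|]
  have hre : w.re = Real.cos θ := by
    rw [← hw', Complex.exp_ofReal_mul_I_re]
  rw [hre, ← Real.cos_abs]
  exact Real.cos_le_cos_of_nonneg_of_le_pi (by positivity)
    (abs_le.mpr ⟨by linarith [Complex.neg_pi_lt_arg w], Complex.arg_le_pi w⟩) hθabs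

open Real Complex in
private lemma aux_sq' {w : ℂ} (h : ‖w‖ = 1) :
    ‖1 + w‖^2 = 2 + 2 * w.re := by
  rw [Complex.sq_norm, Complex.normSq_add]
  have h2 : Complex.normSq w = 1 := by rw [← Complex.sq_norm, h]; norm_num
  simp [h2]
  ring

open Real Complex in
private lemma aux_cos_nonneg' {m : ℕ} (hm : 1 ≤ m) : 0 ≤ Real.cos (π / (2 * m)) := by
  have hm1 : (1:ℝ) ≤ m := by exact_mod_cast hm
  apply Real.cos_nonneg_of_mem_Icc
  have h8 : 0 ≤ π / (2*(m:ℝ)) := by positivity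
  constructor
  · linarith [pi_pos]
  · rw [div_le_div_iff₀ (by positivity) (by norm_num)]
    nlinarith [pi_pos]

open Real Complex in
private lemma aux_bound' {m : ℕ} (hm : 1 ≤ m) {w : ℂ} (hw : w ^ m = -1) :
    ‖1 + w‖ ≤ 2 * Real.cos (π / (2 * m)) := by
  have habs := aux_abs_one' hm hw
  have hre := aux_re_le' hm hw
  have hsq := aux_sq' habs
  have hm0 : (0:ℝ) < m := by exact_mod_cast hm
  have hcos : Real.cos (π / m) = 2 * Real.cos (π / (2*m))^2 - 1 := by
    rw [Real.cos_sq, show 2 * (π / (2*(m:ℝ))) = π / m by field_simp]; ring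
  have hc0 := aux_cos_nonneg' hm
  nlinarith [norm_nonneg (1 + w), hsq]

open Real Complex in
private lemma aux_val' {m : ℕ} (hm : 1 ≤ m) :
    ‖1 + Complex.exp ((π / m : ℝ) * I)‖ = 2 * Real.cos (π / (2 * m)) ∧
    (Complex.exp ((π / m : ℝ) * I)) ^ m = -1 := by
  have hm0 : (0:ℝ) < m := by exact_mod_cast hm
  have hpow : (Complex.exp ((π / m : ℝ) * I)) ^ m = -1 := by
    rw [← Complex.exp_nat_mul]
    have hmne : (m:ℂ) ≠ 0 := Nat.cast_ne_zero.mpr (by omega)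
    rw [show (m:ℂ) * ((π / m : ℝ) * I) = (π:ℝ) * I by
      push_cast; rw [show (m:ℂ) * (↑π / ↑m * I) = ↑π * I * (↑m / ↑m) by ring, div_self hmne,
        mul_one]]
    exact Complex.exp_pi_mul_I
  refine ⟨?_, hpow⟩
  have habs := aux_abs_one' hm hpow
  have hsq := aux_sq' habs
  have hre : (Complex.exp ((π / m : ℝ) * I)).re = Real.cos (π / m) :=
    Complex.exp_ofReal_mul_I_re _
  have hcos : Real.cos (π / m) = 2 * Real.cos (π / (2*m))^2 - 1 := by
    rw [Real.cos_sq, show 2 * (π / (2*(m:ℝ))) = π / m by field_simp]; ring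
  have hc0 := aux_cos_nonneg' hm
  nlinarith [norm_nonneg (1 + Complex.exp ((π / m : ℝ) * I)), hsq, hre]

/-- The matrix with ones on the diagonal and superdiagonal and `-1` in the `(m,1)`
corner has operator norm `2 cos (π/(2m))`. -/
theorem opNorm_cycle_matrix (m : ℕ) (hm : 2 ≤ m)
    (A : Matrix (Fin m) (Fin m) ℂ)
    (hA : ∀ i j : Fin m, A i j =
      if i = j then 1
      else if (i : ℕ) + 1 = (j : ℕ) then 1
      else if (i : ℕ) = m - 1 ∧ (j : ℕ) = 0 then -1
      else 0) :
    opNorm A = 2 * Real.cos (Real.pi / (2 * (m : ℝ))) := by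
  obtain ⟨k, rfl⟩ : ∃ k, m = k + 2 := ⟨m - 2, by omega⟩
  clear hm
  set c : Fin (k+2) → ℂ := fun i => if (i:ℕ) = k+1 then -1 else 1 with hc
  set N : Matrix (Fin (k+2)) (Fin (k+2)) ℂ :=
    Matrix.of (fun i j => if j = i + 1 then c i else 0) with hNdef
  have hval : ∀ i : Fin (k+2), ((i + 1 : Fin (k+2)) : ℕ) =
      if (i:ℕ) = k+1 then 0 else (i:ℕ)+1 := by
    intro i
    rw [Fin.val_add_one]
    simp [Fin.ext_iff, Fin.last]
  -- A = 1 + N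
  have hAN : A = 1 + N := by
    ext i j
    rw [hA]
    have hj := j.isLt; have hi := i.isLt
    simp only [Matrix.add_apply, Matrix.one_apply, hNdef, Matrix.of_apply, hc, Fin.ext_iff,
      hval i]
    split_ifs <;> first | omega | (exfalso; omega) | norm_num
  -- unitarity of N
  have hcc : ∀ i, c i * (starRingEnd ℂ) (c i) = 1 := by
    intro i; by_cases h : (i:ℕ) = k+1 <;> simp [hc, h]
  have hcc' : ∀ i, (starRingEnd ℂ) (c i) * c i = 1 := by
    intro i; by_cases h : (i:ℕ) = k+1 <;> simp [hc, h]
  have hN1 : N * Nᴴ = 1 := by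
    ext i j
    rw [Matrix.mul_apply, Fintype.sum_eq_single (i+1) ?_]
    · simp only [Matrix.conjTranspose_apply, hNdef, Matrix.of_apply, if_pos rfl]
      by_cases h : i = j
      · subst h; simp [hcc i, Matrix.one_apply]
      · have hne : ¬ (i + 1 = j + 1) := fun hh => h (add_right_cancel hh)
        simp [Matrix.one_apply, h, hne]
    · intro x hx; simp [hNdef, hx]
  have hN2 : Nᴴ * N = 1 := by
    ext i j
    rw [Matrix.mul_apply, Fintype.sum_eq_single (i - 1) ?_]
    · simp only [Matrix.conjTranspose_apply, hNdef, Matrix.of_apply, sub_add_cancel]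
      by_cases h : i = j
      · subst h; simp [hcc' (i-1)]
      · simp [Matrix.one_apply, h, Ne.symm h]
    · intro x hx
      have hne : ¬ (i = x + 1) := fun hh => hx (by rw [hh, add_sub_cancel_right])
      simp [hNdef, hne]
  -- powers of N
  have key : ∀ j : ℕ, j ≤ k+2 → ∀ i t : Fin (k+2), (N ^ j) i t =
      (if (i:ℕ) + j < k+2 then 1 else -1) * (if t = i + (j : Fin (k+2)) then 1 else 0) := by
    intro j
    induction j with
    | zero =>
      intro _ i t
      have hi := i.isLt
      simp [Matrix.one_apply, eq_comm]
    | succ j ih =>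
      intro hj i t
      rw [pow_succ, Matrix.mul_apply, Fintype.sum_eq_single (i + (j : Fin (k+2))) ?_]
      · rw [ih (by omega)]
        simp only [if_pos rfl, mul_one, hNdef, Matrix.of_apply]
        have hcast : i + ((j+1 : ℕ) : Fin (k+2)) = (i + (j : Fin (k+2))) + 1 := by
          rw [Nat.cast_add, Nat.cast_one, add_assoc]
        rw [hcast]
        by_cases ht : t = (i + (j : Fin (k+2))) + 1
        · rw [if_pos ht, if_pos ht, mul_one]
          have hval2 : (i + (j : Fin (k+2))).val = ((i:ℕ) + j) % (k+2) := by
            rw [Fin.val_add, Fin.val_natCast, Nat.add_mod_mod]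
          have hi := i.isLt
          have hmod : ((i:ℕ) + j) % (k+2) =
              if (i:ℕ) + j < k+2 then (i:ℕ)+j else (i:ℕ)+j-(k+2) := by
            split_ifs with h
            · exact Nat.mod_eq_of_lt h
            · rw [Nat.mod_eq_sub_mod (by omega), Nat.mod_eq_of_lt (by omega)]
          rw [hc]
          simp only [hval2, hmod]
          split_ifs <;> first | (exfalso; omega) | norm_num
        · rw [if_neg ht, if_neg ht, mul_zero, mul_zero]
      · intro x hx
        rw [ih (by omega)]
        simp [hx]
  have hNm : N ^ (k+2) = -1 := by
    ext i t
    rw [key (k+2) le_rfl]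
    have h0 : ((k+2 : ℕ) : Fin (k+2)) = 0 := by
      exact_mod_cast Fin.natCast_self (k+2)
    rw [h0, add_zero]
    have hi := i.isLt
    rw [if_neg (by omega)]
    simp only [Matrix.neg_apply, Matrix.one_apply]
    by_cases h : i = t
    · subst h; simp
    · have h' : ¬ t = i := fun hh => h hh.symm
      simp [h, h']
  -- pass to continuous linear maps
  set T := Matrix.toEuclideanCLM (𝕜 := ℂ) (n := Fin (k+2)) A with hTdef
  set S := Matrix.toEuclideanCLM (𝕜 := ℂ) (n := Fin (k+2)) N with hSdef
  have hT : T = 1 + S := by rw [hTdef, hAN, _root_.map_add, _root_.map_one]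
  have hSm : S ^ (k+2) = -1 := by rw [hSdef, ← _root_.map_pow, hNm, _root_.map_neg, _root_.map_one]
  -- normality
  have hcomm : star A * A = A * star A := by
    rw [hAN]
    have hstar : star (1 + N : Matrix (Fin (k+2)) (Fin (k+2)) ℂ) = 1 + Nᴴ := by
      simp [Matrix.star_eq_conjTranspose]
    rw [hstar]
    simp only [add_mul, mul_add, one_mul, mul_one, hN1, hN2]
    abel
  haveI hnormal : IsStarNormal T := by
    constructor
    show star T * T = T * star T
    rw [hTdef, ← map_star, ← _root_.map_mul, ← _root_.map_mul, hcomm]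
  -- upper bound via spectral radius
  set r : ℝ := 2 * Real.cos (Real.pi / (2 * ((k:ℝ)+2))) with hr
  have hr' : r = 2 * Real.cos (Real.pi / (2 * ((k+2:ℕ):ℝ))) := by rw [hr]; norm_num
  have hr0 : 0 ≤ r := by
    rw [hr']
    have := aux_cos_nonneg' (m := k+2) (by omega)
    positivity
  have hspec : ∀ z ∈ spectrum ℂ T, ‖z‖ ≤ r := by
    intro z hz
    rw [hT] at hz
    rw [show (1 : (EuclideanSpace ℂ (Fin (k+2)) →L[ℂ] EuclideanSpace ℂ (Fin (k+2)))) + S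
        = algebraMap ℂ _ 1 + S by rw [_root_.map_one], ← spectrum.singleton_add_eq] at hz
    obtain ⟨o, ho, w, hw, rfl⟩ := Set.mem_add.mp hz
    rw [Set.mem_singleton_iff] at ho
    subst ho
    have hwm : w ^ (k+2) = -1 := by
      have h9 := spectrum.pow_image_subset (𝕜 := ℂ) S (k+2) ⟨w, hw, rfl⟩
      rw [hSm, show (-1 : (EuclideanSpace ℂ (Fin (k+2)) →L[ℂ] EuclideanSpace ℂ (Fin (k+2))))
          = algebraMap ℂ _ (-1) by rw [_root_.map_neg, _root_.map_one], spectrum.scalar_eq] at h9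
      exact Set.mem_singleton_iff.mp h9
    rw [hr']
    exact aux_bound' (by omega) hwm
  have hub : ‖T‖ ≤ r := by
    have h := IsStarNormal.spectralRadius_eq_nnnorm T
    rw [spectralRadius] at h
    have h2 : (‖T‖₊ : ENNReal) ≤ ENNReal.ofReal r := by
      rw [← h]
      apply iSup₂_le
      intro z hz
      rw [ENNReal.ofReal, ENNReal.coe_le_coe, Real.le_toNNReal_iff_coe_le hr0, coe_nnnorm]
      exact hspec z hz
    rw [ENNReal.ofReal, ENNReal.coe_le_coe, Real.le_toNNReal_iff_coe_le hr0, coe_nnnorm] at h2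
    exact h2
  -- lower bound via an explicit eigenvector
  obtain ⟨hval0, hpow0⟩ := aux_val' (m := k+2) (by omega)
  set w₀ : ℂ := Complex.exp (((Real.pi / ((k+2 : ℕ) : ℝ) : ℝ) : ℂ) * Complex.I) with hw₀
  have hmem : (1 + w₀) ∈ spectrum ℂ T := by
    rw [hTdef, AlgEquiv.spectrum_eq, spectrum.mem_iff]
    intro hu
    rw [Matrix.isUnit_iff_isUnit_det] at hu
    have hdet : (algebraMap ℂ (Matrix (Fin (k+2)) (Fin (k+2)) ℂ) (1+w₀) - A).det = 0 := by
      rw [← Matrix.exists_mulVec_eq_zero_iff]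
      refine ⟨fun i => w₀ ^ (i:ℕ), ?_, ?_⟩
      · intro hv
        have := congrFun hv 0
        simp at this
      · have hNv : N *ᵥ (fun i => w₀ ^ (i:ℕ)) = fun i : Fin (k+2) => w₀ ^ ((i:ℕ)+1) := by
          funext i
          rw [Matrix.mulVec, dotProduct, Fintype.sum_eq_single (i+1) ?_]
          · simp only [hNdef, Matrix.of_apply, if_pos rfl]
            simp only [hval i, hc]
            by_cases h3 : (i:ℕ) = k+1
            · simp [h3, show k+1+1 = k+2 by omega, hpow0]
            · simp [h3]
          · intro x hx; simp [hNdef, hx]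
        have halg : (algebraMap ℂ (Matrix (Fin (k+2)) (Fin (k+2)) ℂ) (1+w₀))
            = (1+w₀) • (1 : Matrix (Fin (k+2)) (Fin (k+2)) ℂ) := by
          rw [Algebra.algebraMap_eq_smul_one]
        rw [Matrix.sub_mulVec, halg, Matrix.smul_mulVec, Matrix.one_mulVec, hAN,
          Matrix.add_mulVec, Matrix.one_mulVec, hNv]
        funext i
        simp only [Pi.sub_apply, Pi.smul_apply, Pi.add_apply, Pi.zero_apply, smul_eq_mul]
        rw [pow_succ]
        ring
    exact (hu.ne_zero) hdet
  have hlb : r ≤ ‖T‖ := by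
    have h10 := spectrum.norm_le_norm_of_mem hmem
    rw [hval0, ← hr'] at h10
    exact h10
  show ‖T‖ = _
  have : ((k:ℝ)+2) = ((k+2:ℕ):ℝ) := by push_cast; ring
  rw [show (2 : ℝ) * Real.cos (Real.pi / (2 * ((k+2:ℕ):ℝ))) = r by rw [hr']]
  linarith
end
end

section
/- Let m ≥ 1 and let T ∈ M_m be the bidiagonal matrix with T_{ii} = 1 for 1 ≤ i ≤ m, T_{i,i+1} = 1 for 1 ≤ i ≤ m−1, and all other entries 0. Then the operator norm of T equals 2 cos(π/(2m+1)). -/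
/-!
Write `T = B` with `B` the real 0/1 bidiagonal matrix and `θ = π / (2m + 1)`. The positive
vectors `q i = sin ((2i + 1) θ)` and `p i = sin ((2i + 2) θ)` satisfy `B q = 2 cos θ • p` and
`Bᵀ p = 2 cos θ • q`: both reduce to `sin (x - θ) + sin (x + θ) = 2 cos θ sin x`, the boundary
terms vanishing because `sin 0 = 0` and `sin ((2m + 1) θ) = sin π = 0`. Since `B ≥ 0`, such a
pair bounds `‖B‖` by `2 cos θ` (Schur test, via Cauchy–Schwarz); it also forces `‖p‖ = ‖q‖`, so
`‖B q‖ = 2 cos θ ‖q‖` attains the bound.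
-/

open Matrix

noncomputable section

open Finset Real WithLp

section SingularValueBounds

variable {𝕜 ι : Type*} [RCLike 𝕜] [Fintype ι]

theorem norm_mulVec_apply_le (A : Matrix ι ι 𝕜) (x : ι → 𝕜) (i : ι) :
    ‖(A *ᵥ x) i‖ ≤ (A.map (‖·‖) *ᵥ fun j => ‖x j‖) i :=
  (norm_sum_le _ _).trans_eq (by simp only [norm_mul, map_apply, mulVec, dotProduct])

theorem norm_toEuclideanCLM_le_of_schur [DecidableEq ι] (A : Matrix ι ι 𝕜) {p q : ι → ℝ} {α β : ℝ}
    (hq : ∀ j, 0 < q j) (hα : 0 ≤ α)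
    (hrow : A.map (‖·‖) *ᵥ q ≤ α • p) (hcol : (A.map (‖·‖))ᵀ *ᵥ p ≤ β • q) :
    ‖toEuclideanCLM (𝕜 := 𝕜) A‖ ≤ √(α * β) := by
  set B := A.map (‖·‖)
  have hB : ∀ i j, 0 ≤ B i j := fun i j => norm_nonneg (A i j)
  refine ContinuousLinearMap.opNorm_le_bound _ (Real.sqrt_nonneg _) fun x => ?_
  set y : ι → ℝ := fun j => ‖x j‖
  set g : ι → ℝ := fun j => y j ^ 2 / q j
  have hg : 0 ≤ g := fun j => div_nonneg (sq_nonneg _) (hq j).le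
  have hqg_apply (j : ι) : q j * g j = y j ^ 2 := mul_div_cancel₀ _ (hq j).ne'
  have hBg : 0 ≤ B *ᵥ g := fun i => sum_nonneg fun j _ => mul_nonneg (hB i j) (hg j)
  have cauchy_schwarz (i : ι) : (B *ᵥ y) i ^ 2 ≤ (B *ᵥ q) i * (B *ᵥ g) i := by
    refine sum_sq_le_sum_mul_sum_of_sq_le_mul _ (fun j _ => mul_nonneg (hB i j) (hq j).le)
      (fun j _ => mul_nonneg (hB i j) (hg j)) fun j _ => le_of_eq ?_
    rw [mul_mul_mul_comm, hqg_apply, mul_pow, sq]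
  have hqg : q ⬝ᵥ g = ‖x‖ ^ 2 := by
    rw [EuclideanSpace.norm_sq_eq]
    exact sum_congr rfl fun j _ => hqg_apply j
  have key : ‖toEuclideanCLM (𝕜 := 𝕜) A x‖ ^ 2 ≤ α * β * ‖x‖ ^ 2 := calc
    ‖toEuclideanCLM (𝕜 := 𝕜) A x‖ ^ 2 = ∑ i, ‖(A *ᵥ ofLp x) i‖ ^ 2 :=
      EuclideanSpace.norm_sq_eq _
    _ ≤ ∑ i, (B *ᵥ y) i ^ 2 :=
      sum_le_sum fun i _ => pow_le_pow_left₀ (norm_nonneg _) (norm_mulVec_apply_le A _ i) 2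
    _ ≤ ∑ i, (B *ᵥ q) i * (B *ᵥ g) i := sum_le_sum fun i _ => cauchy_schwarz i
    _ ≤ ∑ i, α * p i * (B *ᵥ g) i :=
      sum_le_sum fun i _ => mul_le_mul_of_nonneg_right (hrow i) (hBg i)
    _ = α * ((Bᵀ *ᵥ p) ⬝ᵥ g) := by
      rw [mulVec_transpose, ← dotProduct_mulVec, dotProduct, mul_sum]
      exact sum_congr rfl fun i _ => by ring
    _ ≤ α * ((β • q) ⬝ᵥ g) :=
      mul_le_mul_of_nonneg_left (dotProduct_le_dotProduct_of_nonneg_right hcol hg) hα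
    _ = α * β * ‖x‖ ^ 2 := by rw [smul_dotProduct, hqg, smul_eq_mul, mul_assoc]
  calc ‖toEuclideanCLM (𝕜 := 𝕜) A x‖ = √(‖toEuclideanCLM (𝕜 := 𝕜) A x‖ ^ 2) :=
        (Real.sqrt_sq (norm_nonneg _)).symm
    _ ≤ √(α * β * ‖x‖ ^ 2) := Real.sqrt_le_sqrt key
    _ = √(α * β) * ‖x‖ := by rw [Real.sqrt_mul' _ (sq_nonneg _), Real.sqrt_sq (norm_nonneg _)]

theorem norm_toLp_ofReal_sq (f : ι → ℝ) :
    ‖(toLp 2 fun i => (f i : 𝕜) : EuclideanSpace 𝕜 ι)‖ ^ 2 = f ⬝ᵥ f := by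
  rw [EuclideanSpace.norm_sq_eq]
  exact sum_congr rfl fun i _ => by simp [sq]

theorem abs_le_norm_toEuclideanCLM_of_mulVec_eq [DecidableEq ι] (B : Matrix ι ι ℝ)
    {p q : ι → ℝ} {α : ℝ}
    (hq : q ≠ 0) (hBq : B *ᵥ q = α • p) (hBp : Bᵀ *ᵥ p = α • q) :
    |α| ≤ ‖toEuclideanCLM (𝕜 := 𝕜) (B.map (↑))‖ := by
  set x : EuclideanSpace 𝕜 ι := toLp 2 fun j => (q j : 𝕜)
  have hAx : toEuclideanCLM (𝕜 := 𝕜) (B.map (↑)) x = toLp 2 fun i => ((α * p i : ℝ) : 𝕜) := by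
    rw [toEuclideanCLM_toLp]
    congr 1
    ext i
    rw [← smul_eq_mul, ← Pi.smul_apply, ← hBq]
    simp [mulVec, dotProduct]
  have hpq : α * (p ⬝ᵥ p) = α * (q ⬝ᵥ q) := calc
    α * (p ⬝ᵥ p) = p ⬝ᵥ (B *ᵥ q) := by rw [hBq, dotProduct_smul, smul_eq_mul]
    _ = (Bᵀ *ᵥ p) ⬝ᵥ q := by rw [dotProduct_mulVec, mulVec_transpose]
    _ = α * (q ⬝ᵥ q) := by rw [hBp, smul_dotProduct, smul_eq_mul]
  have hx : 0 < ‖x‖ := by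
    refine norm_pos_iff.2 fun h => hq (funext fun j => ?_)
    simpa [x] using congrFun (congrArg ofLp h) j
  have hnorm : ‖toEuclideanCLM (𝕜 := 𝕜) (B.map (↑)) x‖ = |α| * ‖x‖ := by
    refine (sq_eq_sq₀ (norm_nonneg _) (by positivity)).1 ?_
    rw [hAx, norm_toLp_ofReal_sq, mul_pow, sq_abs, norm_toLp_ofReal_sq]
    change (α • p) ⬝ᵥ (α • p) = _
    rw [smul_dotProduct, dotProduct_smul, smul_eq_mul, smul_eq_mul]
    linear_combination α * hpq
  exact le_of_mul_le_mul_right (hnorm ▸ ContinuousLinearMap.le_opNorm _ x) hx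

theorem norm_toEuclideanCLM_map_eq_of_mulVec_eq [DecidableEq ι] [Nonempty ι] (B : Matrix ι ι ℝ)
    (hB : ∀ i j, 0 ≤ B i j) {p q : ι → ℝ} {α : ℝ} (hq : ∀ j, 0 < q j) (hα : 0 ≤ α)
    (hBq : B *ᵥ q = α • p) (hBp : Bᵀ *ᵥ p = α • q) :
    ‖toEuclideanCLM (𝕜 := 𝕜) (B.map (↑))‖ = α := by
  have hnorm : (B.map ((↑) : ℝ → 𝕜)).map (‖·‖) = B := by
    ext i j
    simp [abs_of_nonneg (hB i j)]
  refine le_antisymm ?_ ?_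
  · rw [← Real.sqrt_mul_self hα]
    refine norm_toEuclideanCLM_le_of_schur _ (p := p) hq hα ?_ ?_
    · rw [hnorm, hBq]
    · rw [hnorm, hBp]
  · have hq0 : q ≠ 0 := fun h => (hq (Classical.arbitrary ι)).ne' (congrFun h _)
    simpa [abs_of_nonneg hα] using abs_le_norm_toEuclideanCLM_of_mulVec_eq (𝕜 := 𝕜) B hq0 hBq hBp

end SingularValueBounds

theorem Real.sin_nat_mul_add_sin_nat_mul (θ : ℝ) (n : ℕ) :
    sin (n * θ) + sin ((n + 2 : ℕ) * θ) = 2 * cos θ * sin ((n + 1 : ℕ) * θ) := by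
  have h := two_mul_sin_mul_cos ((n + 1 : ℕ) * θ) θ
  push_cast at h ⊢
  rw [show ((n : ℝ) + 1) * θ - θ = n * θ by ring,
    show ((n : ℝ) + 1) * θ + θ = (n + 2) * θ by ring] at h
  linarith

theorem Real.sin_nat_mul_pos {θ : ℝ} {k n : ℕ} (hθ : n * θ = π) (hk0 : 0 < k) (hk : k < n) :
    0 < sin (k * θ) := by
  have hθ_pos : 0 < θ := pos_of_mul_pos_right (hθ ▸ pi_pos) (Nat.cast_nonneg n)
  refine sin_pos_of_pos_of_lt_pi (by positivity) (hθ ▸ ?_)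
  gcongr

section Bidiagonal

def bidiag (m : ℕ) : Matrix (Fin m) (Fin m) ℝ :=
  of fun i j => if i = j then 1 else if (i : ℕ) + 1 = j then 1 else 0

variable {m : ℕ}

theorem bidiag_apply (i j : Fin m) :
    bidiag m i j = (if i = j then 1 else 0) + (if (i : ℕ) + 1 = j then 1 else 0) := by
  unfold bidiag
  by_cases h : i = j <;> simp [h]

theorem bidiag_nonneg (i j : Fin m) : 0 ≤ bidiag m i j := by
  rw [bidiag_apply]; positivity

theorem bidiag_mulVec (g : ℕ → ℝ) (hg : g m = 0) (i : Fin m) :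
    (bidiag m *ᵥ fun j => g j) i = g i + g (i + 1) := by
  simp only [mulVec, dotProduct, bidiag_apply, add_mul, ite_mul, one_mul, zero_mul, sum_add_distrib,
    sum_ite_eq, mem_univ, if_true]
  congr 1
  rw [Fin.sum_univ_eq_sum_range (fun k => if (i : ℕ) + 1 = k then g k else 0), sum_ite_eq]
  split_ifs with h
  · rfl
  · rw [show (i : ℕ) + 1 = m by simp at h; omega, hg]

theorem bidiag_transpose_mulVec (g : ℕ → ℝ) (hg : g 0 = 0) (j : Fin m) :
    ((bidiag m)ᵀ *ᵥ fun i => g (i + 1)) j = g (j + 1) + g j := by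
  simp only [mulVec, dotProduct, transpose_apply, bidiag_apply, add_mul, ite_mul, one_mul, zero_mul,
    sum_add_distrib, sum_ite_eq', mem_univ, if_true]
  congr 1
  rw [Fin.sum_univ_eq_sum_range (fun k => if k + 1 = (j : ℕ) then g (k + 1) else 0)]
  have hshift := sum_range_succ' (fun k => if k = (j : ℕ) then g k else 0) m
  rw [sum_ite_eq', if_pos (mem_range.2 (by omega)), ite_eq_right_iff.2 fun h => h ▸ hg,
    add_zero] at hshift
  exact hshift.symm

theorem bidiag_mulVec_sin (θ : ℝ) (hθ : (2 * m + 1 : ℕ) * θ = π) :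
    bidiag m *ᵥ (fun i => sin ((2 * i + 1 : ℕ) * θ)) =
      (2 * cos θ) • fun i : Fin m => sin ((2 * (i + 1) : ℕ) * θ) := by
  ext i
  rw [bidiag_mulVec (fun k => sin ((2 * k + 1 : ℕ) * θ)) (by rw [hθ, sin_pi])]
  exact sin_nat_mul_add_sin_nat_mul θ (2 * i + 1)

theorem bidiag_transpose_mulVec_sin (θ : ℝ) :
    (bidiag m)ᵀ *ᵥ (fun i => sin ((2 * (i + 1) : ℕ) * θ)) =
      (2 * cos θ) • fun i : Fin m => sin ((2 * i + 1 : ℕ) * θ) := by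
  ext j
  rw [bidiag_transpose_mulVec (fun k => sin ((2 * k : ℕ) * θ)) (by simp), add_comm]
  exact sin_nat_mul_add_sin_nat_mul θ (2 * j)

end Bidiagonal

/-- The bidiagonal matrix with ones on the diagonal and superdiagonal has operator
norm `2 cos (π/(2m+1))`. -/
theorem opNorm_bidiagonal (m : ℕ) (hm : 1 ≤ m)
    (T : Matrix (Fin m) (Fin m) ℂ)
    (hT : ∀ i j : Fin m, T i j =
      if i = j then 1
      else if (i : ℕ) + 1 = (j : ℕ) then 1
      else 0) :
    opNorm T = 2 * Real.cos (Real.pi / (2 * (m : ℝ) + 1)) := by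
  set θ := π / (2 * (m : ℝ) + 1)
  have hθ : (2 * m + 1 : ℕ) * θ = π := by
    push_cast
    exact mul_div_cancel₀ _ (by positivity)
  have hTB : T = (bidiag m).map (↑) := by
    ext i j
    rw [hT, map_apply, bidiag_apply]
    split_ifs <;> simp_all
  have : Nonempty (Fin m) := ⟨⟨0, hm⟩⟩
  rw [hTB]
  refine norm_toEuclideanCLM_map_eq_of_mulVec_eq _ bidiag_nonneg
    (fun i => sin_nat_mul_pos hθ (by omega) (by have := i.isLt; omega)) ?_
    (bidiag_mulVec_sin θ hθ) (bidiag_transpose_mulVec_sin θ)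
  have hθ_le : θ ≤ π / 2 := div_le_div_of_nonneg_left pi_pos.le two_pos (by norm_cast; omega)
  have hθ_ge : -(π / 2) ≤ θ := by linarith [pi_pos, show 0 < θ by positivity]
  exact mul_nonneg two_pos.le (cos_nonneg_of_mem_Icc ⟨hθ_ge, hθ_le⟩)
end
end

section
/- Let φ : A(G) → A(H) be a linear map of compression type between digraph spaces, and let p ≥ 1. Let G_p be the digraph on the vertex set {1,…,n}×{1,…,p} with an edge from (i,k) to (j,l) if and only if (i,j) ∈ E(G), so that the digraph space A(G_p) ⊆ M_{np} is naturally identified with the p×p matrices over A(G), and define H_p ⊆ M_{mp} similarly. Then the ampliation φ ⊗ id_{M_p} : A(G_p) → A(H_p) is also of compression type. -/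
open Matrix

noncomputable section

/-- The digraph space `A(G)` of a digraph `E` on the vertex set `ι`: the linear span of the
standard matrix units `e i j` for edges `(i, j)` of `E`. -/
def digraphSpace {ι : Type*} [Fintype ι] [DecidableEq ι] (E : ι → ι → Prop) :
    Submodule ℂ (Matrix ι ι ℂ) :=
  Submodule.span ℂ {A | ∃ i j, E i j ∧ A = Matrix.single i j 1}

/-- The diagonal `C(G)`: the span of the diagonal matrix units `e i i`. -/
def diagSpace (ι : Type*) [Fintype ι] [DecidableEq ι] : Submodule ℂ (Matrix ι ι ℂ) :=
  Submodule.span ℂ {A | ∃ i, A = Matrix.single i i 1}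

/-- The diagonal projection `∑_{i ∈ S} e i i` determined by a set `S` of vertices. -/
def diagProj {ι : Type*} [Fintype ι] [DecidableEq ι] (S : Finset ι) : Matrix ι ι ℂ :=
  ∑ i ∈ S, Matrix.single i i 1

/-- A regular bimodule map `φ : A(G) → A(H)` (modelled as a linear map of the ambient matrix
spaces): each matrix unit of `A(G)` is sent to an orthogonal sum of matrix units of `A(H)`,
the diagonal is mapped into the diagonal, and `φ (c₁ a c₂) = φ c₁ * φ a * φ c₂` for
diagonal `c₁, c₂`. -/
def IsRegularBimoduleMap {ι κ : Type*} [Fintype ι] [DecidableEq ι] [Fintype κ] [DecidableEq κ]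
    (E : ι → ι → Prop) (F : κ → κ → Prop)
    (φ : Matrix ι ι ℂ →ₗ[ℂ] Matrix κ κ ℂ) : Prop :=
  (∀ i j, E i j → ∃ U : Finset (κ × κ),
      (∀ p ∈ U, F p.1 p.2) ∧
      (∀ p ∈ U, ∀ q ∈ U, p ≠ q → p.1 ≠ q.1 ∧ p.2 ≠ q.2) ∧
      φ (Matrix.single i j 1) = ∑ p ∈ U, Matrix.single p.1 p.2 1) ∧
  (∀ c ∈ diagSpace ι, φ c ∈ diagSpace κ) ∧
  (∀ c₁ ∈ diagSpace ι, ∀ c₂ ∈ diagSpace ι, ∀ a ∈ digraphSpace E,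
      φ (c₁ * a * c₂) = φ c₁ * φ a * φ c₂)

/-- A diagonal projection `Q = diagProj S` is `A(G)`-irreducible if the C*-algebra (equivalently,
in finite dimensions, the non-unital star subalgebra) generated by `Q A(G) Q` is all of
`Q M_n Q`. -/
def IsIrreducibleProj {ι : Type*} [Fintype ι] [DecidableEq ι] (E : ι → ι → Prop)
    (S : Finset ι) : Prop :=
  (NonUnitalStarAlgebra.adjoin ℂ
      ((fun a => diagProj S * a * diagProj S) '' (digraphSpace E : Set (Matrix ι ι ℂ))) :
    Set (Matrix ι ι ℂ)) =
  (fun x => diagProj S * x * diagProj S) '' Set.univ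

/-- An elementary compression type map `γ : A(G) → A(H)` associated with the pair of diagonal
projections determined by `S` (an `A(G)`-irreducible set of vertices of `G`) and `T` (a set of
vertices of `H` of the same cardinality): on `A(G)`, `γ` is the compression `a ↦ Q a Q` followed
by an injective star homomorphism carrying matrix units to matrix units, i.e. there is a
bijection `θ : S → T` with `γ a = ∑_{i, j ∈ S} a i j • e (θ i) (θ j)` for `a ∈ A(G)`;
moreover `γ` maps `A(G)` into `A(H)`. -/
def IsElemCompression {ι κ : Type*} [Fintype ι] [DecidableEq ι] [Fintype κ] [DecidableEq κ]
    (E : ι → ι → Prop) (F : κ → κ → Prop)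
    (γ : Matrix ι ι ℂ →ₗ[ℂ] Matrix κ κ ℂ) (S : Finset ι) (T : Finset κ) : Prop :=
  IsIrreducibleProj E S ∧
  (∀ a ∈ digraphSpace E, γ a ∈ digraphSpace F) ∧
  ∃ θ : ι → κ, Set.InjOn θ ↑S ∧ (∀ i ∈ S, θ i ∈ T) ∧ (∀ k ∈ T, ∃ i ∈ S, θ i = k) ∧
    ∀ a ∈ digraphSpace E,
      γ a = ∑ i ∈ S, ∑ j ∈ S, a i j • Matrix.single (θ i) (θ j) (1 : ℂ)

/-- `φ : A(G) → A(H)` is of compression type, with set of compression projections `𝒬`: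
it is a direct sum of elementary compression type maps with mutually orthogonal range
projections, whose compression projections form the set `𝒬`. -/
def IsCompressionTypeWithProjs {ι κ : Type*} [Fintype ι] [DecidableEq ι] [Fintype κ]
    [DecidableEq κ] (E : ι → ι → Prop) (F : κ → κ → Prop)
    (φ : Matrix ι ι ℂ →ₗ[ℂ] Matrix κ κ ℂ) (𝒬 : Set (Finset ι)) : Prop :=
  ∃ (t : ℕ) (γ : Fin t → (Matrix ι ι ℂ →ₗ[ℂ] Matrix κ κ ℂ))
      (S : Fin t → Finset ι) (T : Fin t → Finset κ),
    (∀ i, IsElemCompression E F (γ i) (S i) (T i)) ∧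
    (∀ i j, i ≠ j → Disjoint (T i) (T j)) ∧
    (∀ a ∈ digraphSpace E, φ a = ∑ i, γ i a) ∧
    Set.range S = 𝒬

/-- `φ : A(G) → A(H)` is of compression type: a direct sum of elementary compression type maps
with mutually orthogonal range projections. -/
def IsCompressionType {ι κ : Type*} [Fintype ι] [DecidableEq ι] [Fintype κ] [DecidableEq κ]
    (E : ι → ι → Prop) (F : κ → κ → Prop)
    (φ : Matrix ι ι ℂ →ₗ[ℂ] Matrix κ κ ℂ) : Prop :=
  ∃ 𝒬, IsCompressionTypeWithProjs E F φ 𝒬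

end

section Aux

variable {ι : Type*} [Fintype ι] [DecidableEq ι]

private lemma diagProj_apply (S : Finset ι) (i j : ι) :
    diagProj S i j = if i = j ∧ i ∈ S then 1 else 0 := by
  simp only [diagProj, Matrix.sum_apply, Matrix.single, Matrix.of_apply]
  rw [Finset.sum_congr rfl (fun x _ => show (if x = i ∧ x = j then (1:ℂ) else 0)
      = if x = i then (if i = j then (1:ℂ) else 0) else 0 by
    split_ifs <;> simp_all)]
  rw [Finset.sum_ite_eq' S i (fun _ => if i = j then (1:ℂ) else 0)]
  by_cases hij : i = j
  · subst hij; simp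
  · simp [hij]

private lemma diagProj_mul (S : Finset ι) (A : Matrix ι ι ℂ) (i j : ι) :
    (diagProj S * A) i j = if i ∈ S then A i j else 0 := by
  rw [Matrix.mul_apply]
  rw [Finset.sum_eq_single i]
  · rw [diagProj_apply]; split_ifs <;> simp_all
  · intro b _ hb; rw [diagProj_apply]; split_ifs with h; exact absurd h.1 hb.symm; simp
  · simp

private lemma mul_diagProj (S : Finset ι) (A : Matrix ι ι ℂ) (i j : ι) :
    (A * diagProj S) i j = if j ∈ S then A i j else 0 := by
  rw [Matrix.mul_apply]
  rw [Finset.sum_eq_single j]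
  · rw [diagProj_apply]; split_ifs <;> simp_all
  · intro b _ hb; rw [diagProj_apply]; split_ifs with h; exact absurd h.1 hb; simp
  · simp

private lemma mem_digraphSpace_iff (E : ι → ι → Prop) (A : Matrix ι ι ℂ) :
    A ∈ digraphSpace E ↔ ∀ i j, A i j ≠ 0 → E i j := by
  classical
  constructor
  · intro h i j hne
    induction h using Submodule.span_induction with
    | mem x hx =>
      obtain ⟨a, b, hab, rfl⟩ := hx
      by_contra hE
      apply hne
      simp only [Matrix.single, Matrix.of_apply]
      split_ifs with h'
      · exact absurd (h'.1 ▸ h'.2 ▸ hab) hE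
      · rfl
    | zero => simp at hne
    | add x y hx hy ihx ihy =>
      by_cases h0 : x i j ≠ 0
      · exact ihx h0
      · apply ihy; intro h0'; apply hne; simp only [Matrix.add_apply]
        push_neg at h0; rw [h0, h0', add_zero]
    | smul c x hx ihx =>
      apply ihx; intro h0; apply hne; simp [Matrix.smul_apply, h0]
  · intro h
    rw [Matrix.matrix_eq_sum_single A]
    apply Submodule.sum_mem; intro i _
    apply Submodule.sum_mem; intro j _
    by_cases h0 : A i j = 0
    · rw [h0]; simp [Matrix.single_zero]
    · have : Matrix.single i j (A i j) = A i j • Matrix.single i j (1:ℂ) := by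
        rw [Matrix.smul_single, smul_eq_mul, mul_one]
      rw [this]
      exact Submodule.smul_mem _ _ (Submodule.subset_span ⟨i, j, h i j h0, rfl⟩)

private lemma eq_of_std_ne_zero {μ ν : Type*} [DecidableEq μ] [DecidableEq ν] {i i' : μ} {j j' : ν}
    {c : ℂ} (h : Matrix.single i j c i' j' ≠ 0) : i = i' ∧ j = j' := by
  by_contra hc
  exact h (Matrix.single_apply_of_ne _ _ _ _ _ hc)

private lemma compress_apply (S : Finset ι) (A : Matrix ι ι ℂ) (i j : ι) :
    (diagProj S * A * diagProj S) i j = if i ∈ S ∧ j ∈ S then A i j else 0 := by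
  rw [mul_diagProj, diagProj_mul]
  split_ifs <;> tauto

private lemma compress_of_supported {S : Finset ι} {A : Matrix ι ι ℂ}
    (h : ∀ i j, A i j ≠ 0 → i ∈ S ∧ j ∈ S) : diagProj S * A * diagProj S = A := by
  ext i j
  rw [compress_apply]
  split_ifs with hij
  · rfl
  · by_contra h0
    exact hij (h i j fun h' => h0 h'.symm)

private lemma supported_of_mem_adjoin {E : ι → ι → Prop} {S : Finset ι} {x : Matrix ι ι ℂ}
    (hx : x ∈ NonUnitalStarAlgebra.adjoin ℂ
      ((fun a => diagProj S * a * diagProj S) '' (digraphSpace E : Set (Matrix ι ι ℂ)))) :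
    ∀ i j, x i j ≠ 0 → i ∈ S ∧ j ∈ S := by
  induction hx using NonUnitalStarAlgebra.adjoin_induction with
  | mem x hx =>
    obtain ⟨a, -, rfl⟩ := hx
    intro i j hne
    dsimp only at hne ⊢
    by_contra hc
    apply hne
    rw [compress_apply]
    exact if_neg hc
  | add x y hx hy ihx ihy =>
    intro i j hne
    by_cases h0 : x i j ≠ 0
    · exact ihx i j h0
    · push_neg at h0
      refine ihy i j fun h0' => hne ?_
      simp [Matrix.add_apply, h0, h0']
  | zero => intro i j hne; simp at hne
  | mul x y hx hy ihx ihy =>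
    intro i j hne
    rw [Matrix.mul_apply] at hne
    obtain ⟨c, -, hc⟩ := Finset.exists_ne_zero_of_sum_ne_zero hne
    have h1 : x i c ≠ 0 := fun h => hc (by rw [h, zero_mul])
    have h2 : y c j ≠ 0 := fun h => hc (by rw [h, mul_zero])
    exact ⟨(ihx i c h1).1, (ihy c j h2).2⟩
  | smul r x hx ihx =>
    intro i j hne
    refine ihx i j fun h0 => hne ?_
    simp [Matrix.smul_apply, h0]
  | star x hx ihx =>
    intro i j hne
    rw [Matrix.star_apply] at hne
    have := ihx j i fun h => hne (by rw [h, star_zero])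
    exact ⟨this.2, this.1⟩

private lemma isIrreducibleProj_prod {κ : Type*} [Fintype κ] [DecidableEq κ]
    {E : ι → ι → Prop} (hE : Reflexive E) {S : Finset ι} (h : IsIrreducibleProj E S) :
    IsIrreducibleProj (fun x y : ι × κ => E x.1 y.1) (S ×ˢ Finset.univ) := by
  classical
  set Ep : ι × κ → ι × κ → Prop := fun x y => E x.1 y.1 with hEp
  set Sp : Finset (ι × κ) := S ×ˢ Finset.univ with hSp
  set Aadj := NonUnitalStarAlgebra.adjoin ℂ
      ((fun a => diagProj Sp * a * diagProj Sp) '' (digraphSpace Ep : Set (Matrix (ι × κ) (ι × κ) ℂ)))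
      with hAadj
  have memSp : ∀ x : ι × κ, x ∈ Sp ↔ x.1 ∈ S := by
    intro x; simp [hSp, Finset.mem_product]
  have emb_mem : ∀ (l : κ) (x : Matrix ι ι ℂ),
      x ∈ NonUnitalStarAlgebra.adjoin ℂ
        ((fun a => diagProj S * a * diagProj S) '' (digraphSpace E : Set (Matrix ι ι ℂ))) →
      (Matrix.of fun p q : ι × κ => if p.2 = l ∧ q.2 = l then x p.1 q.1 else 0) ∈ Aadj := by
    intro l x hx
    induction hx using NonUnitalStarAlgebra.adjoin_induction with
    | mem a ha =>
      obtain ⟨a, haG, rfl⟩ := ha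
      apply NonUnitalStarAlgebra.subset_adjoin
      refine ⟨Matrix.of fun p q : ι × κ => if p.2 = l ∧ q.2 = l then a p.1 q.1 else 0, ?_, ?_⟩
      · rw [SetLike.mem_coe, mem_digraphSpace_iff]
        intro p q hpq
        simp only [Matrix.of_apply] at hpq
        split_ifs at hpq with h'
        · exact (mem_digraphSpace_iff E a).mp haG p.1 q.1 hpq
        · exact absurd rfl hpq
      · ext p q
        dsimp only
        rw [compress_apply]
        simp only [Matrix.of_apply]
        rw [compress_apply]
        simp only [memSp]
        split_ifs <;> tauto
    | add x y hx hy ihx ihy =>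
      have : (Matrix.of fun p q : ι × κ => if p.2 = l ∧ q.2 = l then (x + y) p.1 q.1 else 0)
          = (Matrix.of fun p q : ι × κ => if p.2 = l ∧ q.2 = l then x p.1 q.1 else 0)
          + (Matrix.of fun p q : ι × κ => if p.2 = l ∧ q.2 = l then y p.1 q.1 else 0) := by
        ext p q; simp only [Matrix.of_apply, Matrix.add_apply]; split_ifs <;> simp
      rw [this]; exact add_mem ihx ihy
    | zero =>
      have : (Matrix.of fun p q : ι × κ => if p.2 = l ∧ q.2 = l then (0 : Matrix ι ι ℂ) p.1 q.1 else 0)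
          = (0 : Matrix (ι × κ) (ι × κ) ℂ) := by
        ext p q; simp only [Matrix.of_apply, Matrix.zero_apply]; split_ifs <;> rfl
      rw [this]; exact zero_mem _
    | mul x y hx hy ihx ihy =>
      have : (Matrix.of fun p q : ι × κ => if p.2 = l ∧ q.2 = l then (x * y) p.1 q.1 else 0)
          = (Matrix.of fun p q : ι × κ => if p.2 = l ∧ q.2 = l then x p.1 q.1 else 0)
          * (Matrix.of fun p q : ι × κ => if p.2 = l ∧ q.2 = l then y p.1 q.1 else 0) := by
        ext p q
        rw [Matrix.mul_apply]
        simp only [Matrix.of_apply]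
        rw [Fintype.sum_prod_type]
        by_cases h1 : p.2 = l <;> by_cases h2 : q.2 = l <;>
          simp [h1, h2, Matrix.mul_apply, ite_and, Finset.sum_ite_eq, Finset.sum_ite_eq']
      rw [this]; exact mul_mem ihx ihy
    | smul r x hx ihx =>
      have : (Matrix.of fun p q : ι × κ => if p.2 = l ∧ q.2 = l then (r • x) p.1 q.1 else 0)
          = r • (Matrix.of fun p q : ι × κ => if p.2 = l ∧ q.2 = l then x p.1 q.1 else 0) := by
        ext p q; simp only [Matrix.of_apply, Matrix.smul_apply]; split_ifs <;> simp
      rw [this]; exact SMulMemClass.smul_mem r ihx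
    | star x hx ihx =>
      have : (Matrix.of fun p q : ι × κ => if p.2 = l ∧ q.2 = l then (star x) p.1 q.1 else 0)
          = star (Matrix.of fun p q : ι × κ => if p.2 = l ∧ q.2 = l then x p.1 q.1 else 0) := by
        ext p q
        simp only [Matrix.star_apply, Matrix.of_apply]
        split_ifs <;> simp_all
      rw [this]; exact star_mem ihx
  have unit_mem : ∀ a ∈ S, ∀ b ∈ S, ∀ k l : κ,
      Matrix.single (a, k) (b, l) (1 : ℂ) ∈ Aadj := by
    intro a ha b hb k l
    have gen1 : Matrix.single (a, k) (a, l) (1 : ℂ) ∈ Aadj := by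
      apply NonUnitalStarAlgebra.subset_adjoin
      refine ⟨Matrix.single (a, k) (a, l) (1 : ℂ), ?_, ?_⟩
      · rw [SetLike.mem_coe, mem_digraphSpace_iff]
        intro p q hpq
        obtain ⟨rfl, rfl⟩ := eq_of_std_ne_zero hpq
        exact hE a
      · apply compress_of_supported
        intro p q hpq
        obtain ⟨rfl, rfl⟩ := eq_of_std_ne_zero hpq
        exact ⟨(memSp _).mpr ha, (memSp _).mpr ha⟩
    have hab : Matrix.single a b (1 : ℂ) ∈ NonUnitalStarAlgebra.adjoin ℂ
        ((fun a => diagProj S * a * diagProj S) '' (digraphSpace E : Set (Matrix ι ι ℂ))) := by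
      have : Matrix.single a b (1 : ℂ) ∈
          ((fun x => diagProj S * x * diagProj S) '' Set.univ) := by
        refine ⟨Matrix.single a b (1 : ℂ), Set.mem_univ _, ?_⟩
        apply compress_of_supported
        intro p q hpq
        obtain ⟨rfl, rfl⟩ := eq_of_std_ne_zero hpq
        exact ⟨ha, hb⟩
      rw [IsIrreducibleProj] at h
      rw [← h] at this
      exact this
    have h2 : (Matrix.of fun p q : ι × κ => if p.2 = l ∧ q.2 = l
        then Matrix.single a b (1:ℂ) p.1 q.1 else 0) ∈ Aadj := emb_mem l _ hab
    have h3 : (Matrix.of fun p q : ι × κ => if p.2 = l ∧ q.2 = l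
        then Matrix.single a b (1:ℂ) p.1 q.1 else 0)
        = Matrix.single (a, l) (b, l) (1 : ℂ) := by
      ext p q
      simp only [Matrix.of_apply, Matrix.single, Prod.mk.injEq, Prod.ext_iff]
      split_ifs <;> tauto
    rw [h3] at h2
    have := mul_mem gen1 h2
    rwa [Matrix.single_mul_single_same, one_mul] at this
  rw [IsIrreducibleProj]
  apply Set.eq_of_subset_of_subset
  · intro x hx
    refine ⟨x, Set.mem_univ x, ?_⟩
    exact compress_of_supported (supported_of_mem_adjoin hx)
  · rintro x ⟨y, -, rfl⟩
    dsimp only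
    rw [SetLike.mem_coe]
    have hsupp : ∀ p q, (diagProj Sp * y * diagProj Sp) p q ≠ 0 → p ∈ Sp ∧ q ∈ Sp := by
      intro p q hpq
      rw [compress_apply] at hpq
      by_contra hc
      rw [if_neg hc] at hpq
      exact hpq rfl
    rw [Matrix.matrix_eq_sum_single (diagProj Sp * y * diagProj Sp)]
    apply sum_mem
    intro p _
    apply sum_mem
    intro q _
    by_cases h0 : (diagProj Sp * y * diagProj Sp) p q = 0
    · rw [h0, Matrix.single_zero]
      exact zero_mem _
    · obtain ⟨hp, hq⟩ := hsupp p q h0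
      rw [show Matrix.single p q ((diagProj Sp * y * diagProj Sp) p q)
          = ((diagProj Sp * y * diagProj Sp) p q) • Matrix.single p q (1:ℂ) by
        rw [Matrix.smul_single, smul_eq_mul, mul_one]]
      exact SMulMemClass.smul_mem _ (unit_mem p.1 ((memSp p).mp hp) q.1 ((memSp q).mp hq) p.2 q.2)

private lemma double_sum_std_collapse {M : Type*} [AddCommMonoid M] [Module ℂ M]
    {S : Finset ι} {a b : ι} (ha : a ∈ S) (hb : b ∈ S) (f : ι → ι → M) :
    ∑ x ∈ S, ∑ y ∈ S, Matrix.single a b (1:ℂ) x y • f x y = f a b := by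
  rw [Finset.sum_eq_single a]
  · rw [Finset.sum_eq_single b]
    · rw [Matrix.single_apply_same, one_smul]
    · intro y _ hy
      rw [Matrix.single_apply_of_ne _ _ _ _ _ (fun h => hy h.2.symm), zero_smul]
    · exact fun h => absurd hb h
  · intro x _ hx
    apply Finset.sum_eq_zero
    intro y _
    rw [Matrix.single_apply_of_ne _ _ _ _ _ (fun h => hx h.1.symm), zero_smul]
  · exact fun h => absurd ha h

private lemma key_entry {κ μ : Type*} [Fintype κ] [DecidableEq κ]
    [Fintype μ] [DecidableEq μ]
    (S : Finset ι) (θ : ι → μ) (C : Matrix (ι × κ) (ι × κ) ℂ)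
    (u v : μ) (k l : κ) :
    (∑ x ∈ S ×ˢ Finset.univ, ∑ y ∈ S ×ˢ Finset.univ,
        C x y • Matrix.single (θ x.1, x.2) (θ y.1, y.2) (1:ℂ)) (u, k) (v, l)
      = ∑ a ∈ S, ∑ b ∈ S, C (a, k) (b, l) • (Matrix.single (θ a) (θ b) (1:ℂ)) u v := by
  simp only [Matrix.sum_apply, Matrix.smul_apply, Finset.sum_product, Matrix.single,
    Matrix.of_apply, Prod.mk.injEq, smul_eq_mul, mul_ite, mul_one, mul_zero]
  refine Finset.sum_congr rfl fun a _ => ?_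
  rw [Finset.sum_comm]
  refine Finset.sum_congr rfl fun b _ => ?_
  simp [ite_and, Finset.sum_ite_eq, Finset.sum_ite_eq']

end Aux

/-- The ampliation `φ ⊗ id_{M_p}` of a compression type map `φ : A(G) → A(H)`,
viewed as a map from the digraph space of `G_p` (the `p × p` matrices over `A(G)`) to that of
`H_p`, is again of compression type. -/
theorem ampliation_of_compressionType (n m : ℕ)
    (E : Fin n → Fin n → Prop) (F : Fin m → Fin m → Prop)
    (hE : Reflexive E) (hF : Reflexive F)
    (φ : Matrix (Fin n) (Fin n) ℂ →ₗ[ℂ] Matrix (Fin m) (Fin m) ℂ)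
    (hφ : IsCompressionType E F φ)
    (p : ℕ) (hp : 1 ≤ p)
    (Φ : Matrix (Fin n × Fin p) (Fin n × Fin p) ℂ →ₗ[ℂ] Matrix (Fin m × Fin p) (Fin m × Fin p) ℂ)
    (hΦ : ∀ (A : Matrix (Fin n × Fin p) (Fin n × Fin p) ℂ) (x y : Fin m × Fin p),
      Φ A x y = φ (Matrix.of fun i j => A (i, x.2) (j, y.2)) x.1 y.1) :
    IsCompressionType (fun x y : Fin n × Fin p => E x.1 y.1)
      (fun x y : Fin m × Fin p => F x.1 y.1) Φ := by
  classical
  obtain ⟨𝒬, t, γ, S, T, hElem, hdisj, hsum, hrange⟩ := hφ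
  choose θ hθinj hθmemT hθsurj hθform using fun i => (hElem i).2.2
  have hF' : ∀ i, ∀ a ∈ S i, ∀ b ∈ S i, E a b → F (θ i a) (θ i b) := by
    intro i a ha b hb hab
    have hmem : Matrix.single a b (1:ℂ) ∈ digraphSpace E :=
      Submodule.subset_span ⟨a, b, hab, rfl⟩
    have h1 := (hElem i).2.1 _ hmem
    have h3 : γ i (Matrix.single a b (1:ℂ))
        = Matrix.single (θ i a) (θ i b) (1:ℂ) := by
      rw [hθform i _ hmem, double_sum_std_collapse ha hb]
    refine (mem_digraphSpace_iff F _).mp h1 (θ i a) (θ i b) ?_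
    rw [h3, Matrix.single_apply_same]
    exact one_ne_zero
  set Γ : Fin t → (Matrix (Fin n × Fin p) (Fin n × Fin p) ℂ →ₗ[ℂ]
      Matrix (Fin m × Fin p) (Fin m × Fin p) ℂ) := fun i =>
    { toFun := fun A => ∑ x ∈ S i ×ˢ Finset.univ, ∑ y ∈ S i ×ˢ Finset.univ,
        A x y • Matrix.single (θ i x.1, x.2) (θ i y.1, y.2) (1:ℂ)
      map_add' := by
        intro A B
        simp [Matrix.add_apply, add_smul, Finset.sum_add_distrib]
      map_smul' := by
        intro c A
        simp [Matrix.smul_apply, smul_smul, Finset.smul_sum] } with hΓ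
  refine ⟨Set.range (fun i => S i ×ˢ (Finset.univ : Finset (Fin p))), t, Γ,
    fun i => S i ×ˢ Finset.univ, fun i => T i ×ˢ Finset.univ, ?_, ?_, ?_, rfl⟩
  · intro i
    refine ⟨isIrreducibleProj_prod hE (hElem i).1, ?_, fun x => (θ i x.1, x.2), ?_, ?_, ?_, ?_⟩
    · -- maps into digraph space
      intro A hA
      apply Submodule.sum_mem
      intro x hx
      apply Submodule.sum_mem
      intro y hy
      by_cases h0 : A x y = 0
      · rw [h0, zero_smul]; exact zero_mem _
      · have hExy := (mem_digraphSpace_iff _ A).mp hA x y h0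
        have hx1 : x.1 ∈ S i := (Finset.mem_product.mp hx).1
        have hy1 : y.1 ∈ S i := (Finset.mem_product.mp hy).1
        exact Submodule.smul_mem _ _ (Submodule.subset_span
          ⟨(θ i x.1, x.2), (θ i y.1, y.2), hF' i x.1 hx1 y.1 hy1 hExy, rfl⟩)
    · -- InjOn
      intro x hx y hy hxy
      simp only [Finset.coe_product, Set.mem_prod, Finset.mem_coe] at hx hy
      have hxy' : (θ i x.1, x.2) = (θ i y.1, y.2) := hxy
      obtain ⟨h1, h2⟩ := Prod.mk.inj hxy' 
      exact Prod.ext (hθinj i hx.1 hy.1 h1) h2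
    · intro x hx
      rw [Finset.mem_product] at hx ⊢
      exact ⟨hθmemT i x.1 hx.1, Finset.mem_univ _⟩
    · intro k hk
      rw [Finset.mem_product] at hk
      obtain ⟨a, ha, hak⟩ := hθsurj i k.1 hk.1
      exact ⟨(a, k.2), Finset.mem_product.mpr ⟨ha, Finset.mem_univ _⟩,
        Prod.ext hak rfl⟩
    · intro a _
      rfl
  · intro i j hij
    rw [Finset.disjoint_left]
    intro x hx hx'
    rw [Finset.mem_product] at hx hx'
    exact Finset.disjoint_left.mp (hdisj i j hij) hx.1 hx'.1
  · intro A hA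
    ext x y
    obtain ⟨u, k⟩ := x
    obtain ⟨v, l⟩ := y
    rw [hΦ A (u, k) (v, l)]
    set B : Matrix (Fin n) (Fin n) ℂ := Matrix.of fun a b => A (a, k) (b, l) with hB
    have hBmem : B ∈ digraphSpace E := by
      rw [mem_digraphSpace_iff]
      intro a b hab
      exact (mem_digraphSpace_iff _ A).mp hA (a, k) (b, l) hab
    rw [hsum B hBmem, Matrix.sum_apply, Matrix.sum_apply]
    refine Finset.sum_congr rfl fun i _ => ?_
    rw [hθform i B hBmem]
    have := key_entry (S i) (θ i) A u v k l
    rw [show (Γ i) A = ∑ x ∈ S i ×ˢ Finset.univ, ∑ y ∈ S i ×ˢ Finset.univ,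
        A x y • Matrix.single (θ i x.1, x.2) (θ i y.1, y.2) (1:ℂ) from rfl]
    rw [this]
    simp only [Matrix.sum_apply, Matrix.smul_apply]
    rfl
end

section
/- Let A(G) ⊆ M_n and A(H) ⊆ M_m be digraph algebras (the digraphs G and H are reflexive and transitive) and let φ : A(G) → A(H) be a compression type map, φ = γ_1 + ⋯ + γ_t, where each γ_i is an elementary compression type map associated with the pair (Q_i, P_i) and the P_i are mutually orthogonal. Let K ⊆ {1,…,t} be a set of indices containing exactly one index for each distinct projection occurring among Q_1,…,Q_t. Then the C*-subalgebra of M_m generated by φ(A(G)) is *-isomorphic to the direct sum ⊕_{k∈K} M_{r_k}, where r_k = rank Q_k. -/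
open Matrix

namespace CompProof

open Matrix Finset

variable {n m t : ℕ}

lemma star_std (i j : Fin m) : star (Matrix.single i j (1:ℂ)) = Matrix.single j i 1 := by
  ext a b; simp [Matrix.single, conjTranspose_apply, and_comm]

lemma diagProj_eq (Q : Finset (Fin n)) :
    diagProj Q = Matrix.diagonal (fun i => if i ∈ Q then (1:ℂ) else 0) := by
  ext a b
  rw [diagProj, Matrix.sum_apply]
  rcases eq_or_ne a b with rfl | hab
  · simp [Matrix.single, diagonal_apply, Finset.sum_ite_eq, eq_comm]
  · rw [diagonal_apply_ne _ hab]
    refine Finset.sum_eq_zero fun x _ => ?_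
    simp only [Matrix.single, of_apply, ite_eq_right_iff, and_imp]
    rintro rfl rfl; exact absurd rfl hab

lemma compress_apply (Q : Finset (Fin n)) (x : Matrix (Fin n) (Fin n) ℂ) (i j : Fin n) :
    (diagProj Q * x * diagProj Q) i j = if i ∈ Q ∧ j ∈ Q then x i j else 0 := by
  rw [diagProj_eq, Matrix.mul_diagonal, Matrix.diagonal_mul]
  by_cases hi : i ∈ Q <;> by_cases hj : j ∈ Q <;> simp [hi, hj]

lemma digraph_support {E : Fin n → Fin n → Prop} {a : Matrix (Fin n) (Fin n) ℂ}
    (ha : a ∈ digraphSpace E) {i j : Fin n} (h : ¬ E i j) : a i j = 0 := by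
  induction ha using Submodule.span_induction with
  | mem x hx =>
      obtain ⟨i', j', he, rfl⟩ := hx
      simp only [Matrix.single, of_apply, ite_eq_right_iff, and_imp]
      rintro rfl rfl; exact absurd he h
  | zero => rfl
  | add x y hx hy px py => simp [Matrix.add_apply, px, py]
  | smul c x hx px => simp [Matrix.smul_apply, px]

lemma std_mem {E : Fin n → Fin n → Prop} (i j : Fin n) (h : E i j) :
    Matrix.single i j (1:ℂ) ∈ digraphSpace E :=
  Submodule.subset_span ⟨i, j, h, rfl⟩

def Rel (E : Fin n → Fin n → Prop) (Q : Finset (Fin n)) (a b : Fin n) : Prop :=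
  a ∈ Q ∧ b ∈ Q ∧ (E a b ∨ E b a)

lemma reach_total {E : Fin n → Fin n → Prop} {Q : Finset (Fin n)}
    (hirr : IsIrreducibleProj E Q)
    {a b : Fin n} (ha : a ∈ Q) (hb : b ∈ Q) : Relation.ReflTransGen (Rel E Q) a b := by
  have hsymm : Symmetric (Rel E Q) := fun x y ⟨h1, h2, h3⟩ => ⟨h2, h1, h3.symm⟩
  have key : ∀ x ∈ NonUnitalStarAlgebra.adjoin ℂ
      ((fun a => diagProj Q * a * diagProj Q) '' (digraphSpace E : Set (Matrix (Fin n) (Fin n) ℂ))),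
      ∀ i j, x i j ≠ 0 → Relation.ReflTransGen (Rel E Q) i j := by
    intro x hx
    induction hx using NonUnitalStarAlgebra.adjoin_induction with
    | mem x hx =>
        rintro i j hne
        obtain ⟨y, hy, rfl⟩ := hx
        replace hne : (diagProj Q * y * diagProj Q) i j ≠ 0 := hne
        rw [compress_apply] at hne
        by_cases hq : i ∈ Q ∧ j ∈ Q
        · rw [if_pos hq] at hne
          have hE : E i j := by
            by_contra h
            exact hne (digraph_support hy h)
          exact Relation.ReflTransGen.single ⟨hq.1, hq.2, Or.inl hE⟩
        · rw [if_neg hq] at hne; exact absurd rfl hne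
    | add x y hx hy px py =>
        intro i j hne
        rcases (by by_contra h; push_neg at h; simp [Matrix.add_apply, h.1, h.2] at hne :
          x i j ≠ 0 ∨ y i j ≠ 0) with h | h
        · exact px i j h
        · exact py i j h
    | zero => intro i j hne; simp at hne
    | mul x y hx hy px py =>
        intro i j hne
        rw [Matrix.mul_apply] at hne
        obtain ⟨c, _, hc⟩ := Finset.exists_ne_zero_of_sum_ne_zero hne
        exact (px i c (left_ne_zero_of_mul hc)).trans (py c j (right_ne_zero_of_mul hc))
    | smul r x hx px =>
        intro i j hne
        refine px i j fun h => hne ?_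
        simp [Matrix.smul_apply, h]
    | star x hx px =>
        intro i j hne
        have : x j i ≠ 0 := fun h => by
          rw [Matrix.star_apply, h] at hne; exact hne (star_zero ℂ)
        exact Std.Symm.symm (self := @Relation.ReflTransGen.stdSymm _ (Rel E Q) ⟨hsymm⟩) _ _ (px j i this)
  have hmem : Matrix.single a b (1:ℂ) ∈ (fun x => diagProj Q * x * diagProj Q) '' Set.univ := by
    refine ⟨Matrix.single a b 1, Set.mem_univ _, ?_⟩
    ext i j
    show (diagProj Q * Matrix.single a b 1 * diagProj Q : Matrix (Fin n) (Fin n) ℂ) i j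
      = Matrix.single a b 1 i j
    rw [compress_apply]
    by_cases hq : i ∈ Q ∧ j ∈ Q
    · rw [if_pos hq]
    · rw [if_neg hq]; symm
      simp only [Matrix.single, of_apply, ite_eq_right_iff, and_imp]
      rintro rfl rfl; exact absurd ⟨ha, hb⟩ hq
  rw [IsIrreducibleProj] at hirr
  rw [← hirr] at hmem
  refine key _ hmem a b ?_
  simp [Matrix.single]

noncomputable def elt (S : Fin t → Finset (Fin n)) (θ : Fin t → Fin n → Fin m)
    (a b : Fin n) (V : Finset (Fin n)) : Matrix (Fin m) (Fin m) ℂ :=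
  ∑ l : Fin t, if V ⊆ S l then Matrix.single (θ l a) (θ l b) 1 else 0

noncomputable def eltE (S : Fin t → Finset (Fin n)) (θ : Fin t → Fin n → Fin m)
    (k : Fin t) (a b : Fin n) : Matrix (Fin m) (Fin m) ℂ :=
  ∑ l : Fin t, if S l = S k then Matrix.single (θ l a) (θ l b) 1 else 0

def Good (S : Fin t → Finset (Fin n)) (T : Fin t → Finset (Fin m))
    (θ : Fin t → Fin n → Fin m) : Prop :=
  (∀ l, Set.InjOn (θ l) (S l)) ∧ (∀ l, ∀ i ∈ S l, θ l i ∈ T l) ∧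
    (∀ l l', l ≠ l' → Disjoint (T l) (T l'))

lemma theta_ne {S : Fin t → Finset (Fin n)} {T : Fin t → Finset (Fin m)}
    {θ : Fin t → Fin n → Fin m} (hg : Good S T θ) {l l' : Fin t} (h : l ≠ l')
    {b c : Fin n} (hb : b ∈ S l) (hc : c ∈ S l') : θ l b ≠ θ l' c := by
  intro he
  exact Finset.disjoint_left.mp (hg.2.2 l l' h) (hg.2.1 l b hb) (he ▸ hg.2.1 l' c hc)

lemma theta_inj {S : Fin t → Finset (Fin n)} {T : Fin t → Finset (Fin m)}
    {θ : Fin t → Fin n → Fin m} (hg : Good S T θ) {l : Fin t}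
    {b c : Fin n} (hb : b ∈ S l) (hc : c ∈ S l) (he : θ l b = θ l c) : b = c :=
  hg.1 l hb hc he

lemma elt_mul {S : Fin t → Finset (Fin n)} {T : Fin t → Finset (Fin m)}
    {θ : Fin t → Fin n → Fin m} (hg : Good S T θ) {a b c d : Fin n}
    {V V' : Finset (Fin n)} (hb : b ∈ V) (hc : c ∈ V') :
    elt S θ a b V * elt S θ c d V' =
      if b = c then elt S θ a d (V ∪ V') else 0 := by
  rw [elt, elt, Finset.sum_mul_sum]
  have key : ∀ l l' : Fin t,
      (if V ⊆ S l then Matrix.single (θ l a) (θ l b) (1:ℂ) else 0) *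
        (if V' ⊆ S l' then Matrix.single (θ l' c) (θ l' d) (1:ℂ) else 0) =
      if l' = l then
        (if b = c then (if V ∪ V' ⊆ S l then Matrix.single (θ l a) (θ l d) (1:ℂ) else 0) else 0)
      else 0 := by
    intro l l'
    rcases eq_or_ne l' l with rfl | hne
    · rw [if_pos rfl]
      by_cases h1 : V ⊆ S l' <;> by_cases h2 : V' ⊆ S l'
      · have hb' : b ∈ S l' := h1 hb
        have hc' : c ∈ S l' := h2 hc
        rw [if_pos h1, if_pos h2, if_pos (Finset.union_subset h1 h2)]
        rcases eq_or_ne b c with rfl | hbc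
        · rw [if_pos rfl, single_mul_single_same, one_mul]
        · rw [if_neg hbc, single_mul_single_of_ne]
          exact fun h => hbc (theta_inj hg hb' hc' h)
      all_goals
        have hnu : ¬ (V ∪ V' ⊆ S l') := by
          intro h
          first
          | exact h2 ((Finset.subset_union_right).trans h)
          | exact h1 ((Finset.subset_union_left).trans h)
        simp [h1, h2, hnu]
    · rw [if_neg hne]
      by_cases h1 : V ⊆ S l <;> by_cases h2 : V' ⊆ S l'
      · rw [if_pos h1, if_pos h2, single_mul_single_of_ne]
        exact theta_ne hg (Ne.symm hne) (h1 hb) (h2 hc)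
      all_goals simp [h1, h2]
  simp_rw [key, Finset.sum_ite_eq', Finset.mem_univ, if_pos]
  rcases eq_or_ne b c with rfl | hbc
  · simp [elt]
  · simp [hbc]

lemma eltE_mul {S : Fin t → Finset (Fin n)} {T : Fin t → Finset (Fin m)}
    {θ : Fin t → Fin n → Fin m} (hg : Good S T θ) {k k' : Fin t} {a b c d : Fin n}
    (hb : b ∈ S k) (hc : c ∈ S k') :
    eltE S θ k a b * eltE S θ k' c d =
      if S k = S k' ∧ b = c then eltE S θ k a d else 0 := by
  rw [eltE, eltE, Finset.sum_mul_sum]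
  have key : ∀ l l' : Fin t,
      (if S l = S k then Matrix.single (θ l a) (θ l b) (1:ℂ) else 0) *
        (if S l' = S k' then Matrix.single (θ l' c) (θ l' d) (1:ℂ) else 0) =
      if l' = l then
        (if S k = S k' ∧ b = c then (if S l = S k then Matrix.single (θ l a) (θ l d) (1:ℂ) else 0)
         else 0)
      else 0 := by
    intro l l'
    rcases eq_or_ne l' l with rfl | hne
    · rw [if_pos rfl]
      by_cases h1 : S l' = S k <;> by_cases h2 : S l' = S k'
      · have hb' : b ∈ S l' := h1 ▸ hb
        have hc' : c ∈ S l' := h2 ▸ hc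
        have hkk' : S k = S k' := h1 ▸ h2
        rw [if_pos h1, if_pos h2]
        rcases eq_or_ne b c with rfl | hbc
        · rw [if_pos ⟨hkk', rfl⟩, if_pos h1, single_mul_single_same, one_mul]
        · rw [if_neg (fun h => hbc h.2), single_mul_single_of_ne]
          exact fun h => hbc (theta_inj hg hb' hc' h)
      · have h3 : ¬ (S k = S k' ∧ b = c) := fun h => h2 (h1.trans h.1)
        rw [if_neg h2, mul_zero, if_neg h3]
      · have h3 : ¬ S k' = S k := fun h => h1 (h2.trans h)
        simp [h1, h2, h3]
      · simp [h1, h2]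
    · rw [if_neg hne]
      by_cases h1 : S l = S k <;> by_cases h2 : S l' = S k'
      · rw [if_pos h1, if_pos h2, single_mul_single_of_ne]
        exact theta_ne hg (Ne.symm hne) (h1 ▸ hb) (h2 ▸ hc)
      all_goals simp [h1, h2]
  simp_rw [key, Finset.sum_ite_eq', Finset.mem_univ, if_pos]
  by_cases h : S k = S k' ∧ b = c
  · simp [h, eltE]
  · simp [h]

lemma elt_star (S : Fin t → Finset (Fin n)) (θ : Fin t → Fin n → Fin m)
    (a b : Fin n) (V : Finset (Fin n)) : star (elt S θ a b V) = elt S θ b a V := by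
  rw [elt, elt, star_sum]
  refine Finset.sum_congr rfl fun l _ => ?_
  split_ifs with h
  · exact star_std _ _
  · exact star_zero _

lemma eltE_star (S : Fin t → Finset (Fin n)) (θ : Fin t → Fin n → Fin m)
    (k : Fin t) (a b : Fin n) : star (eltE S θ k a b) = eltE S θ k b a := by
  rw [eltE, eltE, star_sum]
  refine Finset.sum_congr rfl fun l _ => ?_
  split_ifs with h
  · exact star_std _ _
  · exact star_zero _

section Mem

variable {S : Fin t → Finset (Fin n)} {T : Fin t → Finset (Fin m)}
  {θ : Fin t → Fin n → Fin m} {E : Fin n → Fin n → Prop}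
  {A : NonUnitalStarSubalgebra ℂ (Matrix (Fin m) (Fin m) ℂ)}

lemma elt_reach_mem (hg : Good S T θ)
    (hgen : ∀ i j, E i j → elt S θ i j {i, j} ∈ A) (hErefl : Reflexive E)
    {k : Fin t} {a b : Fin n}
    (hab : Relation.ReflTransGen (Rel E (S k)) a b) (haS : a ∈ S k) :
    ∃ V : Finset (Fin n), V ⊆ S k ∧ a ∈ V ∧ b ∈ V ∧ elt S θ a b V ∈ A := by
  induction hab with
  | refl =>
      refine ⟨{a}, Finset.singleton_subset_iff.mpr haS, Finset.mem_singleton_self a,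
        Finset.mem_singleton_self a, ?_⟩
      have := hgen a a (hErefl a)
      rwa [Finset.insert_eq_self.mpr (Finset.mem_singleton_self a)] at this
  | @tail b c hab hbc ih =>
      obtain ⟨V, hVS, haV, hbV, hmemV⟩ := ih
      obtain ⟨hbS, hcS, hE⟩ := hbc
      have hgmem : elt S θ b c {b, c} ∈ A := by
        rcases hE with h | h
        · exact hgen b c h
        · have := star_mem (hgen c b h)
          rw [elt_star, Finset.pair_comm c b] at this
          exact this
      have hmul := mul_mem hmemV hgmem
      rw [elt_mul hg hbV (Finset.mem_insert_self b {c}), if_pos rfl] at hmul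
      refine ⟨V ∪ {b, c}, Finset.union_subset hVS ?_, Finset.mem_union_left _ haV,
        Finset.mem_union_right _ (by simp), hmul⟩
      simp [Finset.insert_subset_iff, hbS, hcS]

lemma elt_self_mem (hg : Good S T θ)
    (hgen : ∀ i j, E i j → elt S θ i j {i, j} ∈ A) (hErefl : Reflexive E)
    {k : Fin t} (hirr : IsIrreducibleProj E (S k))
    (W : Finset (Fin n)) (hWS : W ⊆ S k) {a : Fin n} (haS : a ∈ S k) :
    ∃ V : Finset (Fin n), W ⊆ V ∧ V ⊆ S k ∧ a ∈ V ∧ elt S θ a a V ∈ A := by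
  classical
  induction W using Finset.induction_on with
  | empty =>
      obtain ⟨V, h1, h2, _, h4⟩ := elt_reach_mem hg hgen hErefl
        (Relation.ReflTransGen.refl (a := a)) haS
      exact ⟨V, Finset.empty_subset _, h1, h2, h4⟩
  | @insert j W hj ih =>
      have hjS : j ∈ S k := hWS (Finset.mem_insert_self j W)
      have hWS' : W ⊆ S k := (Finset.subset_insert j W).trans hWS
      obtain ⟨V, hWV, hVS, haV, hmemV⟩ := ih hWS'
      obtain ⟨V₁, hV₁S, haV₁, hjV₁, hm₁⟩ :=
        elt_reach_mem hg hgen hErefl (reach_total hirr haS hjS) haS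
      obtain ⟨V₂, hV₂S, hjV₂, haV₂, hm₂⟩ :=
        elt_reach_mem hg hgen hErefl (reach_total hirr hjS haS) hjS
      have h12 := mul_mem hm₁ hm₂
      rw [elt_mul hg hjV₁ hjV₂, if_pos rfl] at h12
      have h3 := mul_mem hmemV h12
      rw [elt_mul hg haV (Finset.mem_union_left _ haV₁), if_pos rfl] at h3
      refine ⟨V ∪ (V₁ ∪ V₂), ?_, ?_, Finset.mem_union_left _ haV, h3⟩
      · intro x hx
        rcases Finset.mem_insert.mp hx with rfl | hx
        · exact Finset.mem_union_right _ (Finset.mem_union_left _ hjV₁)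
        · exact Finset.mem_union_left _ (hWV hx)
      · exact Finset.union_subset hVS (Finset.union_subset hV₁S hV₂S)

lemma elt_full_mem (hg : Good S T θ)
    (hgen : ∀ i j, E i j → elt S θ i j {i, j} ∈ A) (hErefl : Reflexive E)
    {k : Fin t} (hirr : IsIrreducibleProj E (S k))
    {a b : Fin n} (haS : a ∈ S k) (hbS : b ∈ S k) :
    elt S θ a b (S k) ∈ A := by
  obtain ⟨V, hSV, hVS, haV, hm⟩ := elt_self_mem hg hgen hErefl hirr (S k) le_rfl haS
  have hVeq : V = S k := Finset.Subset.antisymm hVS hSV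
  subst hVeq
  obtain ⟨V', hV'S, haV', hbV', hm'⟩ :=
    elt_reach_mem hg hgen hErefl (reach_total hirr haS hbS) haS
  have h := mul_mem hm hm'
  rw [elt_mul hg haS haV', if_pos rfl, Finset.union_eq_left.mpr hV'S] at h
  exact h

end Mem

lemma elt_decomp {S : Fin t → Finset (Fin n)} (θ : Fin t → Fin n → Fin m)
    (K : Finset (Fin t)) (hKall : ∀ i : Fin t, ∃ k ∈ K, S k = S i)
    (hKone : ∀ k ∈ K, ∀ k' ∈ K, S k = S k' → k = k')
    (k₀ : Fin t) (a b : Fin n) :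
    elt S θ a b (S k₀) = ∑ k' ∈ K, if S k₀ ⊆ S k' then eltE S θ k' a b else 0 := by
  have step : ∀ k' ∈ K, (if S k₀ ⊆ S k' then eltE S θ k' a b else 0) =
      ∑ l : Fin t, if S l = S k' ∧ S k₀ ⊆ S k'
        then Matrix.single (θ l a) (θ l b) (1:ℂ) else 0 := by
    intro k' _
    split_ifs with h
    · rw [eltE]
      exact Finset.sum_congr rfl fun l _ => by simp [h]
    · symm
      exact Finset.sum_eq_zero fun l _ => by simp [h]
  rw [Finset.sum_congr rfl step, Finset.sum_comm, elt]
  refine Finset.sum_congr rfl fun l _ => ?_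
  obtain ⟨κ, hκK, hκS⟩ := hKall l
  rw [Finset.sum_eq_single κ]
  · rw [hκS]
    rcases eq_or_ne (S l) (S l) with h | h
    · simp
    · exact absurd rfl h
  · intro k' hk' hne
    rw [if_neg]
    rintro ⟨h1, -⟩
    exact hne (hKone k' hk' κ hκK (h1 ▸ hκS.symm ▸ rfl))
  · intro h; exact absurd hκK h

section Mem2

variable {S : Fin t → Finset (Fin n)} {T : Fin t → Finset (Fin m)}
  {θ : Fin t → Fin n → Fin m} {E : Fin n → Fin n → Prop}
  {A : NonUnitalStarSubalgebra ℂ (Matrix (Fin m) (Fin m) ℂ)}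

lemma theta_mem (hg : Good S T θ)
    (hgen : ∀ i j, E i j → elt S θ i j {i, j} ∈ A) (hErefl : Reflexive E)
    (hirr : ∀ k, IsIrreducibleProj E (S k))
    (K : Finset (Fin t)) (hKall : ∀ i : Fin t, ∃ k ∈ K, S k = S i)
    (hKone : ∀ k ∈ K, ∀ k' ∈ K, S k = S k' → k = k') :
    ∀ (c : ℕ) (k : Fin t), k ∈ K → n - (S k).card < c →
      ∀ x : Matrix (Fin n) (Fin n) ℂ, (∀ a b, x a b ≠ 0 → a ∈ S k ∧ b ∈ S k) →
      (∑ a : Fin n, ∑ b : Fin n, x a b • eltE S θ k a b) ∈ A := by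
  intro c
  induction c with
  | zero => intro k _ h; omega
  | succ c ih =>
      intro k hkK hcard x hsupp
      have hR : (∑ a : Fin n, ∑ b : Fin n, x a b • elt S θ a b (S k)) ∈ A := by
        refine sum_mem fun a _ => sum_mem fun b _ => ?_
        by_cases hx : x a b = 0
        · rw [hx, zero_smul]; exact zero_mem _
        · exact SMulMemClass.smul_mem _
            (elt_full_mem hg hgen hErefl (hirr k) (hsupp a b hx).1 (hsupp a b hx).2)
      have hdec : (∑ a : Fin n, ∑ b : Fin n, x a b • elt S θ a b (S k)) =
          ∑ k' ∈ K, (if S k ⊆ S k'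
            then (∑ a : Fin n, ∑ b : Fin n, x a b • eltE S θ k' a b) else 0) := by
        have e1 : ∀ k' ∈ K, (if S k ⊆ S k'
              then (∑ a : Fin n, ∑ b : Fin n, x a b • eltE S θ k' a b) else 0) =
            ∑ a : Fin n, ∑ b : Fin n, x a b •
              (if S k ⊆ S k' then eltE S θ k' a b else 0) := by
          intro k' _
          split_ifs with h
          · rfl
          · symm; exact Finset.sum_eq_zero fun a _ =>
              Finset.sum_eq_zero fun b _ => by rw [smul_zero]
        calc (∑ a : Fin n, ∑ b : Fin n, x a b • elt S θ a b (S k))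
            = ∑ a : Fin n, ∑ b : Fin n, ∑ k' ∈ K,
                x a b • (if S k ⊆ S k' then eltE S θ k' a b else 0) := by
              refine Finset.sum_congr rfl fun a _ => Finset.sum_congr rfl fun b _ => ?_
              rw [elt_decomp θ K hKall hKone k a b, Finset.smul_sum]
          _ = ∑ a : Fin n, ∑ k' ∈ K, ∑ b : Fin n,
                x a b • (if S k ⊆ S k' then eltE S θ k' a b else 0) := by
              exact Finset.sum_congr rfl fun a _ => Finset.sum_comm
          _ = ∑ k' ∈ K, ∑ a : Fin n, ∑ b : Fin n,
                x a b • (if S k ⊆ S k' then eltE S θ k' a b else 0) := Finset.sum_comm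
          _ = ∑ k' ∈ K, (if S k ⊆ S k'
                then (∑ a : Fin n, ∑ b : Fin n, x a b • eltE S θ k' a b) else 0) :=
              Finset.sum_congr rfl fun k' hk' => (e1 k' hk').symm
      have hsplit : (∑ k' ∈ K, (if S k ⊆ S k'
            then (∑ a : Fin n, ∑ b : Fin n, x a b • eltE S θ k' a b) else 0)) =
          (∑ a : Fin n, ∑ b : Fin n, x a b • eltE S θ k a b) +
          ∑ k' ∈ K.erase k, (if S k ⊆ S k'
            then (∑ a : Fin n, ∑ b : Fin n, x a b • eltE S θ k' a b) else 0) := by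
        rw [← Finset.add_sum_erase K _ hkK, if_pos (Finset.Subset.refl _)]
      have hfin : (∑ a : Fin n, ∑ b : Fin n, x a b • eltE S θ k a b) =
          (∑ a : Fin n, ∑ b : Fin n, x a b • elt S θ a b (S k)) -
          ∑ k' ∈ K.erase k, (if S k ⊆ S k'
            then (∑ a : Fin n, ∑ b : Fin n, x a b • eltE S θ k' a b) else 0) := by
        rw [hdec, hsplit, add_sub_cancel_right]
      rw [hfin]
      refine sub_mem hR (sum_mem fun k' hk' => ?_)
      split_ifs with hsub
      · have hk'K : k' ∈ K := Finset.mem_of_mem_erase hk'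
        have hne : S k' ≠ S k := fun h =>
          (Finset.ne_of_mem_erase hk') (hKone k' hk'K k hkK h)
        have hss : S k ⊂ S k' := lt_of_le_of_ne hsub (fun h => hne h.symm)
        have hlt : (S k).card < (S k').card := Finset.card_lt_card hss
        have hle : (S k').card ≤ n := by
          have := Finset.card_le_univ (S k')
          simpa using this
        refine ih k' hk'K (by omega) x fun a b hx => ?_
        exact ⟨hsub (hsupp a b hx).1, hsub (hsupp a b hx).2⟩
      · exact zero_mem _

end Mem2

noncomputable def emb (Q : Finset (Fin n)) (p : Fin Q.card) : Fin n :=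
  (Q.orderIsoOfFin rfl p : Fin n)

lemma emb_mem (Q : Finset (Fin n)) (p : Fin Q.card) : emb Q p ∈ Q :=
  (Q.orderIsoOfFin rfl p).2

lemma emb_inj (Q : Finset (Fin n)) : Function.Injective (emb Q) := fun p q h =>
  (Q.orderIsoOfFin rfl).injective (Subtype.ext h)

lemma sum_emb (Q : Finset (Fin n)) {M : Type*} [AddCommMonoid M] (f : Fin n → M) :
    ∑ p : Fin Q.card, f (emb Q p) = ∑ i ∈ Q, f i := by
  rw [← Finset.sum_coe_sort Q f]
  exact Fintype.sum_equiv (Q.orderIsoOfFin rfl).toEquiv _ _ fun p => rfl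

lemma eltE_apply {S : Fin t → Finset (Fin n)} {T : Fin t → Finset (Fin m)}
    {θ : Fin t → Fin n → Fin m} (hg : Good S T θ) {k' k₀ : Fin t} {a b i j : Fin n}
    (ha : a ∈ S k') (hb : b ∈ S k') (hi : i ∈ S k₀) (hj : j ∈ S k₀) :
    (eltE S θ k' a b) (θ k₀ i) (θ k₀ j) =
      if S k₀ = S k' ∧ a = i ∧ b = j then 1 else 0 := by
  rw [eltE, Matrix.sum_apply]
  rw [Finset.sum_eq_single k₀]
  · rcases eq_or_ne (S k₀) (S k') with he | he
    · rw [if_pos he]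
      have ha' : a ∈ S k₀ := he ▸ ha
      have hb' : b ∈ S k₀ := he ▸ hb
      simp only [Matrix.single, of_apply, he, true_and]
      have hiff : (θ k₀ a = θ k₀ i ∧ θ k₀ b = θ k₀ j) ↔ (a = i ∧ b = j) := by
        constructor
        · rintro ⟨h1, h2⟩
          exact ⟨theta_inj hg ha' hi h1, theta_inj hg hb' hj h2⟩
        · rintro ⟨rfl, rfl⟩; exact ⟨rfl, rfl⟩
      rw [if_congr hiff rfl rfl]
    · rw [if_neg he, if_neg (fun h => he h.1)]
      rfl
  · intro l _ hne
    split_ifs with hl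
    · have ha' : a ∈ S l := hl ▸ ha
      simp only [Matrix.single, of_apply, ite_eq_right_iff, and_imp]
      intro h1 h2
      exact absurd h1 (theta_ne hg hne ha' hi)
    · rfl
  · intro h; exact absurd (Finset.mem_univ k₀) h

section Blk

variable {S : Fin t → Finset (Fin n)} {T : Fin t → Finset (Fin m)}
  {θ : Fin t → Fin n → Fin m}

lemma blk_eq (θ : Fin t → Fin n → Fin m) (k : Fin t) {r : ℕ} (e : Fin r → Fin n)
    (z : Matrix (Fin r) (Fin r) ℂ) :
    (∑ a : Fin n, ∑ b : Fin n,
      ((∑ p : Fin r, ∑ q : Fin r, z p q • Matrix.single (e p) (e q) (1:ℂ)) a b) •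
        eltE S θ k a b)
    = ∑ p : Fin r, ∑ q : Fin r, z p q • eltE S θ k (e p) (e q) := by
  have entry : ∀ a b : Fin n,
      ((∑ p : Fin r, ∑ q : Fin r, z p q • Matrix.single (e p) (e q) (1:ℂ)) a b) •
          eltE S θ k a b
      = ∑ p : Fin r, ∑ q : Fin r,
          if e p = a then (if e q = b then z p q • eltE S θ k a b else 0) else 0 := by
    intro a b
    rw [Matrix.sum_apply, Finset.sum_smul]
    refine Finset.sum_congr rfl fun p _ => ?_
    rw [Matrix.sum_apply, Finset.sum_smul]
    refine Finset.sum_congr rfl fun q _ => ?_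
    simp only [Matrix.smul_apply, Matrix.single, of_apply, smul_eq_mul]
    by_cases h1 : e p = a <;> by_cases h2 : e q = b <;> simp [h1, h2]
  calc (∑ a : Fin n, ∑ b : Fin n,
      ((∑ p : Fin r, ∑ q : Fin r, z p q • Matrix.single (e p) (e q) (1:ℂ)) a b) •
        eltE S θ k a b)
      = ∑ a : Fin n, ∑ b : Fin n, ∑ p : Fin r, ∑ q : Fin r,
          if e p = a then (if e q = b then z p q • eltE S θ k a b else 0) else 0 :=
        Finset.sum_congr rfl fun a _ => Finset.sum_congr rfl fun b _ => entry a b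
    _ = ∑ a : Fin n, ∑ p : Fin r, ∑ b : Fin n, ∑ q : Fin r,
          if e p = a then (if e q = b then z p q • eltE S θ k a b else 0) else 0 :=
        Finset.sum_congr rfl fun a _ => Finset.sum_comm
    _ = ∑ p : Fin r, ∑ a : Fin n, ∑ b : Fin n, ∑ q : Fin r,
          if e p = a then (if e q = b then z p q • eltE S θ k a b else 0) else 0 :=
        Finset.sum_comm
    _ = ∑ p : Fin r, ∑ a : Fin n, ∑ q : Fin r, ∑ b : Fin n,
          if e p = a then (if e q = b then z p q • eltE S θ k a b else 0) else 0 :=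
        Finset.sum_congr rfl fun p _ => Finset.sum_congr rfl fun a _ => Finset.sum_comm
    _ = ∑ p : Fin r, ∑ a : Fin n,
          if e p = a then (∑ q : Fin r, ∑ b : Fin n,
            if e q = b then z p q • eltE S θ k a b else 0) else 0 := by
        refine Finset.sum_congr rfl fun p _ => Finset.sum_congr rfl fun a _ => ?_
        split_ifs with h
        · rfl
        · exact Finset.sum_eq_zero fun q _ => Finset.sum_eq_zero fun b _ => rfl
    _ = ∑ p : Fin r, ∑ q : Fin r, z p q • eltE S θ k (e p) (e q) := by
        refine Finset.sum_congr rfl fun p _ => ?_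
        rw [Finset.sum_ite_eq Finset.univ (e p)
          (fun a => ∑ q : Fin r, ∑ b : Fin n,
            if e q = b then z p q • eltE S θ k a b else 0), if_pos (Finset.mem_univ _)]
        refine Finset.sum_congr rfl fun q _ => ?_
        rw [Finset.sum_ite_eq Finset.univ (e q)
          (fun b => z p q • eltE S θ k (e p) b), if_pos (Finset.mem_univ _)]

lemma sigma_support {r : ℕ} (e : Fin r → Fin n) (Q : Finset (Fin n)) (he : ∀ p, e p ∈ Q)
    (z : Matrix (Fin r) (Fin r) ℂ) (a b : Fin n)
    (h : (∑ p : Fin r, ∑ q : Fin r, z p q • Matrix.single (e p) (e q) (1:ℂ)) a b ≠ 0) :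
    a ∈ Q ∧ b ∈ Q := by
  by_contra hq
  refine h ?_
  rw [Matrix.sum_apply]
  refine Finset.sum_eq_zero fun p _ => ?_
  rw [Matrix.sum_apply]
  refine Finset.sum_eq_zero fun q _ => ?_
  simp only [Matrix.smul_apply, Matrix.single, of_apply, smul_eq_mul]
  rw [if_neg, mul_zero]
  rintro ⟨rfl, rfl⟩
  exact hq ⟨he p, he q⟩

lemma blk_mul_ne (hg : Good S T θ) {k k' : Fin t} (hSne : S k ≠ S k') {r r' : ℕ}
    (e : Fin r → Fin n) (e' : Fin r' → Fin n)
    (he : ∀ p, e p ∈ S k) (he' : ∀ p, e' p ∈ S k')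
    (z : Matrix (Fin r) (Fin r) ℂ) (w : Matrix (Fin r') (Fin r') ℂ) :
    (∑ p : Fin r, ∑ q : Fin r, z p q • eltE S θ k (e p) (e q)) *
      (∑ p : Fin r', ∑ q : Fin r', w p q • eltE S θ k' (e' p) (e' q)) = 0 := by
  rw [Finset.sum_mul]
  refine Finset.sum_eq_zero fun p _ => ?_
  rw [Finset.sum_mul]
  refine Finset.sum_eq_zero fun q _ => ?_
  rw [Finset.mul_sum]
  refine Finset.sum_eq_zero fun p' _ => ?_
  rw [Finset.mul_sum]
  refine Finset.sum_eq_zero fun q' _ => ?_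
  rw [smul_mul_assoc, mul_smul_comm, eltE_mul hg (he q) (he' p'),
    if_neg (fun h => hSne h.1), smul_zero, smul_zero]

lemma blk_mul_eq (hg : Good S T θ) {k : Fin t} {r : ℕ}
    (e : Fin r → Fin n) (he : ∀ p, e p ∈ S k) (hinj : Function.Injective e)
    (z w : Matrix (Fin r) (Fin r) ℂ) :
    (∑ p : Fin r, ∑ q : Fin r, z p q • eltE S θ k (e p) (e q)) *
      (∑ p : Fin r, ∑ q : Fin r, w p q • eltE S θ k (e p) (e q))
    = ∑ p : Fin r, ∑ q : Fin r, (z * w) p q • eltE S θ k (e p) (e q) := by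
  have key : ∀ p q p' q' : Fin r,
      (z p q • eltE S θ k (e p) (e q)) * (w p' q' • eltE S θ k (e p') (e q')) =
        if q = p' then (z p q * w p' q') • eltE S θ k (e p) (e q') else 0 := by
    intro p q p' q'
    rw [smul_mul_assoc, mul_smul_comm, eltE_mul hg (he q) (he p')]
    rcases eq_or_ne q p' with rfl | hne
    · rw [if_pos ⟨rfl, rfl⟩, if_pos rfl, smul_smul]
    · rw [if_neg (fun h => hne (hinj h.2)), if_neg hne, smul_zero, smul_zero]
  calc (∑ p : Fin r, ∑ q : Fin r, z p q • eltE S θ k (e p) (e q)) *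
      (∑ p : Fin r, ∑ q : Fin r, w p q • eltE S θ k (e p) (e q))
      = ∑ p : Fin r, ∑ q : Fin r, ∑ p' : Fin r, ∑ q' : Fin r,
          (z p q • eltE S θ k (e p) (e q)) * (w p' q' • eltE S θ k (e p') (e q')) := by
        rw [Finset.sum_mul]
        refine Finset.sum_congr rfl fun p _ => ?_
        rw [Finset.sum_mul]
        refine Finset.sum_congr rfl fun q _ => ?_
        rw [Finset.mul_sum]
        refine Finset.sum_congr rfl fun p' _ => ?_
        rw [Finset.mul_sum]
    _ = ∑ p : Fin r, ∑ q : Fin r,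
          if q ∈ Finset.univ then (∑ q' : Fin r, (z p q * w q q') • eltE S θ k (e p) (e q'))
          else 0 := by
        refine Finset.sum_congr rfl fun p _ => Finset.sum_congr rfl fun q _ => ?_
        rw [← Finset.sum_ite_eq' Finset.univ q
          (fun p' => ∑ q' : Fin r, (z p q * w p' q') • eltE S θ k (e p) (e q'))]
        refine Finset.sum_congr rfl fun p' _ => ?_
        rcases eq_or_ne q p' with rfl | hne
        · rw [if_pos rfl]
          exact Finset.sum_congr rfl fun q' _ => by rw [key, if_pos rfl]
        · rw [if_neg (fun h => hne h.symm)]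
          exact Finset.sum_eq_zero fun q' _ => by rw [key, if_neg hne]
    _ = ∑ p : Fin r, ∑ q' : Fin r, (z * w) p q' • eltE S θ k (e p) (e q') := by
        refine Finset.sum_congr rfl fun p _ => ?_
        simp only [Finset.mem_univ, if_pos]
        rw [Finset.sum_comm]
        refine Finset.sum_congr rfl fun q' _ => ?_
        rw [Matrix.mul_apply, Finset.sum_smul]

end Blk

section Psi

variable {S : Fin t → Finset (Fin n)} {T : Fin t → Finset (Fin m)}
  {θ : Fin t → Fin n → Fin m} {E : Fin n → Fin n → Prop}
  {A : NonUnitalStarSubalgebra ℂ (Matrix (Fin m) (Fin m) ℂ)}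

noncomputable def PsiFun (S : Fin t → Finset (Fin n)) (θ : Fin t → Fin n → Fin m)
    (K : Finset (Fin t))
    (z : (k : K) → Matrix (Fin ((S k).card)) (Fin ((S k).card)) ℂ) :
    Matrix (Fin m) (Fin m) ℂ :=
  ∑ k : K, ∑ p, ∑ q,
    z k p q • eltE S θ (k : Fin t) (emb (S (k : Fin t)) p) (emb (S (k : Fin t)) q)

noncomputable def PhiFun (S : Fin t → Finset (Fin n)) (θ : Fin t → Fin n → Fin m)
    (K : Finset (Fin t)) (x : Matrix (Fin m) (Fin m) ℂ) :
    (k : K) → Matrix (Fin ((S k).card)) (Fin ((S k).card)) ℂ :=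
  fun k => Matrix.of fun p q =>
    x (θ (k : Fin t) (emb (S (k : Fin t)) p)) (θ (k : Fin t) (emb (S (k : Fin t)) q))

lemma Psi_mem (hg : Good S T θ)
    (hgen : ∀ i j, E i j → elt S θ i j {i, j} ∈ A) (hErefl : Reflexive E)
    (hirr : ∀ k, IsIrreducibleProj E (S k))
    (K : Finset (Fin t)) (hKall : ∀ i : Fin t, ∃ k ∈ K, S k = S i)
    (hKone : ∀ k ∈ K, ∀ k' ∈ K, S k = S k' → k = k')
    (z : (k : K) → Matrix (Fin ((S k).card)) (Fin ((S k).card)) ℂ) :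
    PsiFun S θ K z ∈ A := by
  rw [PsiFun]
  refine sum_mem fun k _ => ?_
  rw [← blk_eq θ (k : Fin t) (emb (S (k : Fin t))) (z k)]
  refine theta_mem hg hgen hErefl hirr K hKall hKone (n + 1) (k : Fin t) k.2 ?_ _ ?_
  · have : (S (k : Fin t)).card ≤ n := by
      simpa using Finset.card_le_univ (S (k : Fin t))
    omega
  · exact fun a b h => sigma_support _ _ (emb_mem _) _ a b h

lemma Psi_zero (K : Finset (Fin t)) : PsiFun S θ K 0 = 0 := by
  rw [PsiFun]
  refine Finset.sum_eq_zero fun k _ => Finset.sum_eq_zero fun p _ =>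
    Finset.sum_eq_zero fun q _ => ?_
  show (0 : Matrix _ _ ℂ) p q • _ = 0
  rw [Matrix.zero_apply, zero_smul]

lemma Psi_add (K : Finset (Fin t)) (z w : (k : K) → Matrix (Fin ((S k).card)) (Fin ((S k).card)) ℂ) :
    PsiFun S θ K (z + w) = PsiFun S θ K z + PsiFun S θ K w := by
  rw [PsiFun, PsiFun, PsiFun, ← Finset.sum_add_distrib]
  refine Finset.sum_congr rfl fun k _ => ?_
  rw [← Finset.sum_add_distrib]
  refine Finset.sum_congr rfl fun p _ => ?_
  rw [← Finset.sum_add_distrib]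
  refine Finset.sum_congr rfl fun q _ => ?_
  show ((z k + w k) p q) • _ = _
  rw [Matrix.add_apply, add_smul]

lemma Psi_smul (K : Finset (Fin t)) (c : ℂ)
    (z : (k : K) → Matrix (Fin ((S k).card)) (Fin ((S k).card)) ℂ) :
    PsiFun S θ K (c • z) = c • PsiFun S θ K z := by
  rw [PsiFun, PsiFun, Finset.smul_sum]
  refine Finset.sum_congr rfl fun k _ => ?_
  rw [Finset.smul_sum]
  refine Finset.sum_congr rfl fun p _ => ?_
  rw [Finset.smul_sum]
  refine Finset.sum_congr rfl fun q _ => ?_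
  show ((c • z k) p q) • _ = _
  rw [Matrix.smul_apply, smul_assoc]

lemma Psi_star (K : Finset (Fin t))
    (z : (k : K) → Matrix (Fin ((S k).card)) (Fin ((S k).card)) ℂ) :
    star (PsiFun S θ K z) = PsiFun S θ K (star z) := by
  rw [PsiFun, star_sum]
  calc ∑ k : K, star (∑ p, ∑ q,
        z k p q • eltE S θ (k : Fin t) (emb (S (k : Fin t)) p) (emb (S (k : Fin t)) q))
      = ∑ k : K, ∑ p, ∑ q, star (z k p q) •
          eltE S θ (k : Fin t) (emb (S (k : Fin t)) q) (emb (S (k : Fin t)) p) := by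
        refine Finset.sum_congr rfl fun k _ => ?_
        rw [star_sum]
        refine Finset.sum_congr rfl fun p _ => ?_
        rw [star_sum]
        refine Finset.sum_congr rfl fun q _ => ?_
        rw [star_smul, eltE_star]
    _ = PsiFun S θ K (star z) := by
        rw [PsiFun]
        refine Finset.sum_congr rfl fun k _ => ?_
        rw [Finset.sum_comm]
        refine Finset.sum_congr rfl fun p _ => Finset.sum_congr rfl fun q _ => ?_
        congr 1

lemma Psi_mul (hg : Good S T θ) (K : Finset (Fin t))
    (hKone : ∀ k ∈ K, ∀ k' ∈ K, S k = S k' → k = k')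
    (z w : (k : K) → Matrix (Fin ((S k).card)) (Fin ((S k).card)) ℂ) :
    PsiFun S θ K z * PsiFun S θ K w = PsiFun S θ K (z * w) := by
  rw [PsiFun, PsiFun, PsiFun, Finset.sum_mul_sum]
  refine Finset.sum_congr rfl fun k _ => ?_
  rw [Finset.sum_eq_single k]
  · rw [blk_mul_eq hg (emb _) (emb_mem _) (emb_inj _) (z k) (w k)]
    rfl
  · intro k' _ hne
    refine blk_mul_ne hg ?_ (emb _) (emb _) (emb_mem _) (emb_mem _) (z k) (w k')
    intro h
    exact hne (Subtype.ext (hKone _ k'.2 _ k.2 h.symm))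
  · intro h
    exact absurd (Finset.mem_univ k) h

lemma PhiPsi (hg : Good S T θ) (K : Finset (Fin t))
    (hKone : ∀ k ∈ K, ∀ k' ∈ K, S k = S k' → k = k')
    (z : (k : K) → Matrix (Fin ((S k).card)) (Fin ((S k).card)) ℂ) :
    PhiFun S θ K (PsiFun S θ K z) = z := by
  funext k
  ext p q
  show (PsiFun S θ K z)
      (θ (k : Fin t) (emb (S (k : Fin t)) p)) (θ (k : Fin t) (emb (S (k : Fin t)) q)) = z k p q
  rw [PsiFun, Matrix.sum_apply, Finset.sum_eq_single k]
  · rw [Matrix.sum_apply, Finset.sum_eq_single p]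
    · rw [Matrix.sum_apply, Finset.sum_eq_single q]
      · rw [Matrix.smul_apply,
          eltE_apply hg (emb_mem _ _) (emb_mem _ _) (emb_mem _ _) (emb_mem _ _),
          if_pos ⟨rfl, rfl, rfl⟩, smul_eq_mul, mul_one]
      · intro q' _ hne
        rw [Matrix.smul_apply,
          eltE_apply hg (emb_mem _ _) (emb_mem _ _) (emb_mem _ _) (emb_mem _ _),
          if_neg, smul_zero]
        rintro ⟨-, -, h⟩
        exact hne (emb_inj _ h)
      · intro h; exact absurd (Finset.mem_univ q) h
    · intro p' _ hne
      rw [Matrix.sum_apply]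
      refine Finset.sum_eq_zero fun q' _ => ?_
      rw [Matrix.smul_apply,
        eltE_apply hg (emb_mem _ _) (emb_mem _ _) (emb_mem _ _) (emb_mem _ _),
        if_neg, smul_zero]
      rintro ⟨-, h, -⟩
      exact hne (emb_inj _ h)
    · intro h; exact absurd (Finset.mem_univ p) h
  · intro k' _ hne
    rw [Matrix.sum_apply]
    refine Finset.sum_eq_zero fun p' _ => ?_
    rw [Matrix.sum_apply]
    refine Finset.sum_eq_zero fun q' _ => ?_
    rw [Matrix.smul_apply,
      eltE_apply hg (emb_mem _ _) (emb_mem _ _) (emb_mem _ _) (emb_mem _ _),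
      if_neg, smul_zero]
    rintro ⟨h, -, -⟩
    exact hne (Subtype.ext (hKone _ k'.2 _ k.2 h.symm))
  · intro h; exact absurd (Finset.mem_univ k) h

end Psi

section PhiE

variable {S : Fin t → Finset (Fin n)} {T : Fin t → Finset (Fin m)}
  {θ : Fin t → Fin n → Fin m} {E : Fin n → Fin n → Prop}
  {φ : Matrix (Fin n) (Fin n) ℂ →ₗ[ℂ] Matrix (Fin m) (Fin m) ℂ}
  {γ : Fin t → (Matrix (Fin n) (Fin n) ℂ →ₗ[ℂ] Matrix (Fin m) (Fin m) ℂ)}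

lemma sum_std_coef (S : Fin t → Finset (Fin n)) (θ : Fin t → Fin n → Fin m)
    (l : Fin t) (i j : Fin n) :
    (∑ i' ∈ S l, ∑ j' ∈ S l, (Matrix.single i j (1:ℂ)) i' j' •
      Matrix.single (θ l i') (θ l j') (1:ℂ))
    = if i ∈ S l ∧ j ∈ S l then Matrix.single (θ l i) (θ l j) 1 else 0 := by
  have h1 : ∀ i' j' : Fin n,
      (Matrix.single i j (1:ℂ)) i' j' • Matrix.single (θ l i') (θ l j') (1:ℂ)
      = if i = i' then (if j = j' then Matrix.single (θ l i') (θ l j') (1:ℂ) else 0) else 0 := by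
    intro i' j'
    by_cases h1 : i = i' <;> by_cases h2 : j = j' <;>
      simp [Matrix.single, of_apply, h1, h2]
  rw [Finset.sum_congr rfl fun i' _ => Finset.sum_congr rfl fun j' _ => h1 i' j']
  have h2 : ∀ i' ∈ S l,
      (∑ j' ∈ S l, if i = i' then
        (if j = j' then Matrix.single (θ l i') (θ l j') (1:ℂ) else 0) else 0)
      = if i = i' then (if j ∈ S l then Matrix.single (θ l i') (θ l j) 1 else 0) else 0 := by
    intro i' _
    by_cases h : i = i'
    · rw [if_pos h, Finset.sum_congr rfl (fun j' _ => if_pos h),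
        Finset.sum_ite_eq (S l) j (fun j' => Matrix.single (θ l i') (θ l j') (1:ℂ))]
    · rw [if_neg h]
      exact Finset.sum_eq_zero fun j' _ => if_neg h
  rw [Finset.sum_congr rfl h2,
    Finset.sum_ite_eq (S l) i
      (fun i' => if j ∈ S l then Matrix.single (θ l i') (θ l j) (1:ℂ) else 0)]
  by_cases hi : i ∈ S l <;> by_cases hj : j ∈ S l <;> simp [hi, hj]

lemma phi_std (hsum : ∀ a ∈ digraphSpace E, φ a = ∑ l, γ l a)
    (hform : ∀ l, ∀ a ∈ digraphSpace E, γ l a =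
      ∑ i ∈ S l, ∑ j ∈ S l, a i j • Matrix.single (θ l i) (θ l j) (1:ℂ))
    {i j : Fin n} (hij : E i j) :
    φ (Matrix.single i j 1) = elt S θ i j {i, j} := by
  rw [hsum _ (std_mem i j hij), elt]
  refine Finset.sum_congr rfl fun l _ => ?_
  rw [hform l _ (std_mem i j hij), sum_std_coef S θ l i j]
  refine if_congr ?_ rfl rfl
  simp [Finset.insert_subset_iff]

lemma phi_eq (hsum : ∀ a ∈ digraphSpace E, φ a = ∑ l, γ l a)
    (hform : ∀ l, ∀ a ∈ digraphSpace E, γ l a =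
      ∑ i ∈ S l, ∑ j ∈ S l, a i j • Matrix.single (θ l i) (θ l j) (1:ℂ))
    (K : Finset (Fin t)) (hKall : ∀ i : Fin t, ∃ k ∈ K, S k = S i)
    (hKone : ∀ k ∈ K, ∀ k' ∈ K, S k = S k' → k = k')
    {a : Matrix (Fin n) (Fin n) ℂ} (ha : a ∈ digraphSpace E) :
    φ a = PsiFun S θ K (fun k => Matrix.of fun p q =>
      a (emb (S (k : Fin t)) p) (emb (S (k : Fin t)) q)) := by
  have hF : ∀ k0 : Fin t,
      (∑ p : Fin (S k0).card, ∑ q : Fin (S k0).card,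
        a (emb (S k0) p) (emb (S k0) q) • eltE S θ k0 (emb (S k0) p) (emb (S k0) q))
      = ∑ l : Fin t, if S l = S k0 then
          (∑ i ∈ S l, ∑ j ∈ S l, a i j • Matrix.single (θ l i) (θ l j) (1:ℂ)) else 0 := by
    intro k0
    calc (∑ p : Fin (S k0).card, ∑ q : Fin (S k0).card,
        a (emb (S k0) p) (emb (S k0) q) • eltE S θ k0 (emb (S k0) p) (emb (S k0) q))
        = ∑ p : Fin (S k0).card, ∑ q : Fin (S k0).card, ∑ l : Fin t,
            if S l = S k0 then a (emb (S k0) p) (emb (S k0) q) •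
              Matrix.single (θ l (emb (S k0) p)) (θ l (emb (S k0) q)) (1:ℂ) else 0 := by
          refine Finset.sum_congr rfl fun p _ => Finset.sum_congr rfl fun q _ => ?_
          rw [eltE, Finset.smul_sum]
          refine Finset.sum_congr rfl fun l _ => ?_
          split_ifs with h
          · rfl
          · rw [smul_zero]
      _ = ∑ p : Fin (S k0).card, ∑ l : Fin t, ∑ q : Fin (S k0).card,
            if S l = S k0 then a (emb (S k0) p) (emb (S k0) q) •
              Matrix.single (θ l (emb (S k0) p)) (θ l (emb (S k0) q)) (1:ℂ) else 0 :=
          Finset.sum_congr rfl fun p _ => Finset.sum_comm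
      _ = ∑ l : Fin t, ∑ p : Fin (S k0).card, ∑ q : Fin (S k0).card,
            if S l = S k0 then a (emb (S k0) p) (emb (S k0) q) •
              Matrix.single (θ l (emb (S k0) p)) (θ l (emb (S k0) q)) (1:ℂ) else 0 :=
          Finset.sum_comm
      _ = ∑ l : Fin t, if S l = S k0 then
            (∑ p : Fin (S k0).card, ∑ q : Fin (S k0).card,
              a (emb (S k0) p) (emb (S k0) q) •
                Matrix.single (θ l (emb (S k0) p)) (θ l (emb (S k0) q)) (1:ℂ)) else 0 := by
          refine Finset.sum_congr rfl fun l _ => ?_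
          split_ifs with h
          · rfl
          · exact Finset.sum_eq_zero fun p _ => Finset.sum_eq_zero fun q _ => rfl
      _ = ∑ l : Fin t, if S l = S k0 then
            (∑ i ∈ S l, ∑ j ∈ S l, a i j • Matrix.single (θ l i) (θ l j) (1:ℂ)) else 0 := by
          refine Finset.sum_congr rfl fun l _ => ?_
          split_ifs with h
          · rw [h]
            calc (∑ p : Fin (S k0).card, ∑ q : Fin (S k0).card,
                a (emb (S k0) p) (emb (S k0) q) •
                  Matrix.single (θ l (emb (S k0) p)) (θ l (emb (S k0) q)) (1:ℂ))
                = ∑ p : Fin (S k0).card, ∑ j ∈ S k0,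
                    a (emb (S k0) p) j •
                      Matrix.single (θ l (emb (S k0) p)) (θ l j) (1:ℂ) :=
                  Finset.sum_congr rfl fun p _ => sum_emb (S k0)
                    (fun j => a (emb (S k0) p) j •
                      Matrix.single (θ l (emb (S k0) p)) (θ l j) (1:ℂ))
              _ = ∑ i ∈ S k0, ∑ j ∈ S k0, a i j • Matrix.single (θ l i) (θ l j) (1:ℂ) :=
                  sum_emb (S k0) (fun i => ∑ j ∈ S k0,
                    a i j • Matrix.single (θ l i) (θ l j) (1:ℂ))
          · rfl
  rw [hsum a ha, PsiFun]
  have hcoe : (∑ k : K, ∑ p : Fin (S (k : Fin t)).card, ∑ q : Fin (S (k : Fin t)).card,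
        (Matrix.of fun p q => a (emb (S (k : Fin t)) p) (emb (S (k : Fin t)) q)) p q •
          eltE S θ (k : Fin t) (emb (S (k : Fin t)) p) (emb (S (k : Fin t)) q))
      = ∑ k ∈ K, ∑ p : Fin (S k).card, ∑ q : Fin (S k).card,
          a (emb (S k) p) (emb (S k) q) • eltE S θ k (emb (S k) p) (emb (S k) q) :=
    Finset.sum_coe_sort K (fun k => ∑ p : Fin (S k).card, ∑ q : Fin (S k).card,
      a (emb (S k) p) (emb (S k) q) • eltE S θ k (emb (S k) p) (emb (S k) q))
  rw [hcoe]
  symm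
  calc ∑ k ∈ K, ∑ p : Fin (S k).card, ∑ q : Fin (S k).card,
        a (emb (S k) p) (emb (S k) q) • eltE S θ k (emb (S k) p) (emb (S k) q)
      = ∑ k ∈ K, ∑ l : Fin t, if S l = S k then
          (∑ i ∈ S l, ∑ j ∈ S l, a i j • Matrix.single (θ l i) (θ l j) (1:ℂ)) else 0 :=
        Finset.sum_congr rfl fun k _ => hF k
    _ = ∑ l : Fin t, ∑ k ∈ K, (if S l = S k then
          (∑ i ∈ S l, ∑ j ∈ S l, a i j • Matrix.single (θ l i) (θ l j) (1:ℂ)) else 0) :=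
        Finset.sum_comm
    _ = ∑ l : Fin t, ∑ i ∈ S l, ∑ j ∈ S l, a i j • Matrix.single (θ l i) (θ l j) (1:ℂ) := by
        refine Finset.sum_congr rfl fun l _ => ?_
        obtain ⟨κ, hκK, hκS⟩ := hKall l
        rw [Finset.sum_eq_single κ]
        · rw [if_pos hκS.symm]
        · intro k' hk' hne
          rw [if_neg]
          intro h
          exact hne (hKone k' hk' κ hκK (h.symm.trans hκS.symm))
        · intro h; exact absurd hκK h
    _ = ∑ l, γ l a := Finset.sum_congr rfl fun l _ => (hform l a ha).symm

lemma A_sub_range (hg : Good S T θ)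
    (hsum : ∀ a ∈ digraphSpace E, φ a = ∑ l, γ l a)
    (hform : ∀ l, ∀ a ∈ digraphSpace E, γ l a =
      ∑ i ∈ S l, ∑ j ∈ S l, a i j • Matrix.single (θ l i) (θ l j) (1:ℂ))
    (K : Finset (Fin t)) (hKall : ∀ i : Fin t, ∃ k ∈ K, S k = S i)
    (hKone : ∀ k ∈ K, ∀ k' ∈ K, S k = S k' → k = k') :
    ∀ x ∈ NonUnitalStarAlgebra.adjoin ℂ
      (⇑φ '' (digraphSpace E : Set (Matrix (Fin n) (Fin n) ℂ))),
      ∃ z, PsiFun S θ K z = x := by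
  intro x hx
  induction hx using NonUnitalStarAlgebra.adjoin_induction with
  | mem x hx =>
      obtain ⟨a, ha, rfl⟩ := hx
      exact ⟨_, (phi_eq hsum hform K hKall hKone ha).symm⟩
  | add x y hx hy px py =>
      obtain ⟨z1, h1⟩ := px
      obtain ⟨z2, h2⟩ := py
      exact ⟨z1 + z2, by rw [Psi_add, h1, h2]⟩
  | zero => exact ⟨0, Psi_zero K⟩
  | mul x y hx hy px py =>
      obtain ⟨z1, h1⟩ := px
      obtain ⟨z2, h2⟩ := py
      exact ⟨z1 * z2, by rw [← Psi_mul hg K hKone, h1, h2]⟩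
  | smul c x hx px =>
      obtain ⟨z1, h1⟩ := px
      exact ⟨c • z1, by rw [Psi_smul, h1]⟩
  | star x hx px =>
      obtain ⟨z1, h1⟩ := px
      exact ⟨star z1, by rw [← Psi_star, h1]⟩

end PhiE

end CompProof


/-- Proposition 7: If `φ : A(G) → A(H)` is a compression type map between digraph
algebras, `φ = γ₁ + ⋯ + γ_t` with pairs `(Q_i, P_i)`, and `K` selects exactly one index for each
distinct projection among the `Q_i`, then the C*-algebra generated by `φ(A(G))` is
*-isomorphic to `⊕_{k ∈ K} M_{rank Q_k}`. -/
theorem cstar_of_compressionType_image (n m : ℕ)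
    (E : Fin n → Fin n → Prop) (F : Fin m → Fin m → Prop)
    (hErefl : Reflexive E) (hEtrans : Transitive E)
    (hFrefl : Reflexive F) (hFtrans : Transitive F)
    (φ : Matrix (Fin n) (Fin n) ℂ →ₗ[ℂ] Matrix (Fin m) (Fin m) ℂ)
    (t : ℕ) (γ : Fin t → (Matrix (Fin n) (Fin n) ℂ →ₗ[ℂ] Matrix (Fin m) (Fin m) ℂ))
    (S : Fin t → Finset (Fin n)) (T : Fin t → Finset (Fin m))
    (helem : ∀ i, IsElemCompression E F (γ i) (S i) (T i))
    (horth : ∀ i j, i ≠ j → Disjoint (T i) (T j))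
    (hsum : ∀ a ∈ digraphSpace E, φ a = ∑ i, γ i a)
    (K : Finset (Fin t))
    (hKall : ∀ i : Fin t, ∃ k ∈ K, S k = S i)
    (hKone : ∀ k ∈ K, ∀ k' ∈ K, S k = S k' → k = k') :
    Nonempty
      ((NonUnitalStarAlgebra.adjoin ℂ
          (⇑φ '' (digraphSpace E : Set (Matrix (Fin n) (Fin n) ℂ)))) ≃⋆ₐ[ℂ]
        ((k : K) → Matrix (Fin ((S k).card)) (Fin ((S k).card)) ℂ)) := by
  classical
  choose θ hinj hmemT honto hform using fun l => (helem l).2.2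
  have hg : CompProof.Good S T θ := ⟨hinj, hmemT, horth⟩
  have hirr : ∀ k, IsIrreducibleProj E (S k) := fun k => (helem k).1
  have hgen : ∀ i j, E i j → CompProof.elt S θ i j {i, j} ∈
      NonUnitalStarAlgebra.adjoin ℂ
        (⇑φ '' (digraphSpace E : Set (Matrix (Fin n) (Fin n) ℂ))) := by
    intro i j hij
    rw [← CompProof.phi_std hsum hform hij]
    exact NonUnitalStarAlgebra.subset_adjoin ℂ _ ⟨_, CompProof.std_mem i j hij, rfl⟩
  have hsub := CompProof.A_sub_range hg hsum hform K hKall hKone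
  refine ⟨{ toFun := fun x => CompProof.PhiFun S θ K ↑x,
            invFun := fun z => ⟨CompProof.PsiFun S θ K z,
              CompProof.Psi_mem hg hgen hErefl hirr K hKall hKone z⟩,
            left_inv := ?_, right_inv := ?_, map_mul' := ?_, map_add' := ?_,
            map_star' := ?_, map_smul' := ?_ }⟩
  · intro x
    obtain ⟨z, hz⟩ := hsub ↑x x.2
    refine Subtype.ext ?_
    show CompProof.PsiFun S θ K (CompProof.PhiFun S θ K ↑x) = ↑x
    rw [← hz, CompProof.PhiPsi hg K hKone]
  · intro z
    exact CompProof.PhiPsi hg K hKone z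
  · intro x y
    obtain ⟨z1, h1⟩ := hsub ↑x x.2
    obtain ⟨z2, h2⟩ := hsub ↑y y.2
    have hxy : ((x * y : _) : Matrix (Fin m) (Fin m) ℂ) =
        CompProof.PsiFun S θ K (z1 * z2) := by
      rw [← CompProof.Psi_mul hg K hKone, h1, h2]; rfl
    show CompProof.PhiFun S θ K ↑(x * y) =
      CompProof.PhiFun S θ K ↑x * CompProof.PhiFun S θ K ↑y
    rw [hxy, CompProof.PhiPsi hg K hKone, ← h1, ← h2,
      CompProof.PhiPsi hg K hKone, CompProof.PhiPsi hg K hKone]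
  · intro x y
    rfl
  · intro x
    rfl
  · intro c x
    rfl
end

section
/- Let γ : A(G) → A(H) be an elementary compression type map associated with the pair (Q^G, P^H) and let η : A(H) → A(F) be an elementary compression type map associated with the pair (Q^H, P^F), where A(G), A(H), A(F) are digraph algebras. Then η ∘ γ : A(G) → A(F) is of compression type: η ∘ γ = δ_1 + ⋯ + δ_s (possibly the empty sum, i.e. the zero map), a direct sum of elementary compression type maps δ_i associated with pairs (q_i, p_i), where q_1,…,q_s are pairwise orthogonal diagonal subprojections of Q^G and p_1,…,p_s are pairwise orthogonal diagonal subprojections of P^F. -/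
open Matrix

set_option linter.unusedSectionVars false

noncomputable section Helpers

variable {ι κ : Type*} [Fintype ι] [DecidableEq ι] [Fintype κ] [DecidableEq κ]

lemma diagProj_eq_diagonal (S : Finset ι) :
    diagProj S = Matrix.diagonal (fun i => if i ∈ S then (1:ℂ) else 0) := by
  ext a b
  simp only [diagProj, Matrix.sum_apply, Matrix.diagonal_apply]
  rcases eq_or_ne a b with rfl | hab
  · simp only [Matrix.single, Matrix.of_apply, and_self]
    rw [if_pos trivial, Finset.sum_ite_eq' S a (fun _ => (1:ℂ))]
  · rw [if_neg hab]
    apply Finset.sum_eq_zero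
    intro i _
    exact Matrix.single_apply_of_ne i i 1 a b (by rintro ⟨rfl, rfl⟩; exact hab rfl)

lemma mem_digraphSpace_apply (E : ι → ι → Prop) {a : Matrix ι ι ℂ}
    (ha : a ∈ digraphSpace E) {i j : ι} (h : ¬ E i j) : a i j = 0 := by
  induction ha using Submodule.span_induction with
  | mem x hx =>
    obtain ⟨k, l, hkl, rfl⟩ := hx
    exact Matrix.single_apply_of_ne k l 1 i j (by rintro ⟨rfl, rfl⟩; exact h hkl)
  | zero => rfl
  | add x y _ _ hx hy => simp [Matrix.add_apply, hx, hy]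
  | smul c x _ hx => simp [Matrix.smul_apply, hx]

lemma stdBasisMatrix_mem_digraphSpace (E : ι → ι → Prop) {i j : ι} (h : E i j) :
    Matrix.single i j (1:ℂ) ∈ digraphSpace E :=
  Submodule.subset_span ⟨i, j, h, rfl⟩

lemma sum_stdBasis_apply_smul (S : Finset ι) (k l : ι) (f : ι → ι → Matrix κ κ ℂ) :
    ∑ i ∈ S, ∑ j ∈ S, (Matrix.single k l (1:ℂ)) i j • f i j
      = if k ∈ S ∧ l ∈ S then f k l else 0 := by
  have h : ∀ i j, (Matrix.single k l (1:ℂ)) i j • f i j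
      = if (k,l) = (i,j) then f i j else 0 := by
    intro i j
    simp [Matrix.single, Matrix.of_apply, Prod.ext_iff, ite_smul]
  simp_rw [h, ← Finset.sum_product']
  have h2 : ∀ x : ι × ι, ((k, l) = (x.1, x.2)) = ((k,l) = x) := by intro x; rw [Prod.mk.eta]
  simp_rw [h2]
  rw [Finset.sum_ite_eq (S ×ˢ S) (k,l) (fun x => f x.1 x.2)]
  simp [Finset.mem_product]

lemma diagProj_mul_diagProj (q : Finset ι) : diagProj q * diagProj q = diagProj q := by
  rw [diagProj_eq_diagonal, Matrix.diagonal_mul_diagonal]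
  have : (fun i => (if i ∈ q then (1:ℂ) else 0) * (if i ∈ q then (1:ℂ) else 0))
      = fun i => if i ∈ q then (1:ℂ) else 0 := by
    funext i; by_cases h : i ∈ q <;> simp [h]
  rw [this]

lemma star_diagProj (q : Finset ι) : star (diagProj q) = diagProj q := by
  rw [diagProj_eq_diagonal]
  show (Matrix.diagonal _)ᴴ = _
  rw [Matrix.diagonal_conjTranspose]
  have : (star fun i => if i ∈ q then (1:ℂ) else 0)
      = fun i => if i ∈ q then (1:ℂ) else 0 := by
    funext i; by_cases h : i ∈ q <;> simp [h, Pi.star_apply]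
  rw [this]

lemma star_stdBasisMatrix (i j : ι) :
    star (Matrix.single i j (1:ℂ)) = Matrix.single j i 1 := by
  show (Matrix.single i j (1:ℂ))ᴴ = _
  ext a b
  simp [Matrix.conjTranspose_apply, Matrix.single, Matrix.of_apply, and_comm]

lemma diagProj_mul_stdBasis (q : Finset ι) {x y : ι} (hx : x ∈ q) (hy : y ∈ q) :
    diagProj q * Matrix.single x y (1:ℂ) * diagProj q
      = Matrix.single x y 1 := by
  ext a b
  rw [diagProj_eq_diagonal, Matrix.mul_diagonal, Matrix.diagonal_mul]
  by_cases h : x = a ∧ y = b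
  · obtain ⟨rfl, rfl⟩ := h
    simp [hx, hy]
  · rw [Matrix.single_apply_of_ne x y _ a b h]
    ring

lemma sum_smul_stdBasis_apply (q : Finset ι) (g : ι → ι → ℂ) (a b : ι) :
    (∑ i ∈ q, ∑ j ∈ q, g i j • Matrix.single i j (1:ℂ)) a b
      = if a ∈ q ∧ b ∈ q then g a b else 0 := by
  have h : ∀ i j : ι, (g i j • Matrix.single i j (1:ℂ)) a b
      = if (i,j) = (a,b) then g i j else 0 := by
    intro i j
    simp [Matrix.single, Matrix.of_apply, Prod.ext_iff, mul_ite]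
  simp only [Matrix.sum_apply, h, ← Finset.sum_product']
  have h2 : ∀ x : ι × ι, ((x.1, x.2) = (a, b)) = (x = (a,b)) := by
    intro x; rw [Prod.mk.eta]
  simp_rw [h2]
  rw [Finset.sum_ite_eq' (q ×ˢ q) (a,b) (fun x => g x.1 x.2)]
  simp [Finset.mem_product]

lemma corner_eq_sum (q : Finset ι) (x : Matrix ι ι ℂ) :
    diagProj q * x * diagProj q
      = ∑ i ∈ q, ∑ j ∈ q, x i j • Matrix.single i j (1:ℂ) := by
  ext a b
  rw [diagProj_eq_diagonal, Matrix.mul_diagonal, Matrix.diagonal_mul,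
    sum_smul_stdBasis_apply q x a b]
  by_cases ha : a ∈ q <;> by_cases hb : b ∈ q <;> simp [ha, hb]

/-- The corner `Q M Q` as a non-unital star subalgebra. -/
def cornerSubalg (q : Finset ι) : NonUnitalStarSubalgebra ℂ (Matrix ι ι ℂ) where
  carrier := {x | diagProj q * x * diagProj q = x}
  add_mem' := by
    intro a b ha hb
    simp only [Set.mem_setOf_eq] at *
    rw [Matrix.mul_add, Matrix.add_mul, ha, hb]
  zero_mem' := by simp
  mul_mem' := by
    intro a b ha hb
    simp only [Set.mem_setOf_eq] at *
    have h2 : ∀ x : Matrix ι ι ℂ, x * diagProj q * diagProj q = x * diagProj q := by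
      intro x; rw [Matrix.mul_assoc, diagProj_mul_diagProj]
    conv_lhs => rw [← ha, ← hb]
    conv_rhs => rw [← ha, ← hb]
    simp only [← Matrix.mul_assoc, diagProj_mul_diagProj, h2]
  smul_mem' := by
    intro c a ha
    simp only [Set.mem_setOf_eq] at *
    rw [Matrix.mul_smul, Matrix.smul_mul, ha]
  star_mem' := by
    intro a ha
    simp only [Set.mem_setOf_eq] at *
    conv_rhs => rw [← ha]
    rw [Matrix.star_mul, Matrix.star_mul, star_diagProj, Matrix.mul_assoc]

lemma irreducibleProj_of_connected (E : ι → ι → Prop) (hErefl : Reflexive E) (q : Finset ι)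
    (hconn : ∀ x ∈ q, ∀ y ∈ q,
      Relation.ReflTransGen (fun a b => a ∈ q ∧ b ∈ q ∧ (E a b ∨ E b a)) x y) :
    IsIrreducibleProj E q := by
  classical
  set Q := diagProj q with hQ
  set A := NonUnitalStarAlgebra.adjoin ℂ
    ((fun a => Q * a * Q) '' (digraphSpace E : Set (Matrix ι ι ℂ))) with hA
  have hgen : ∀ x ∈ q, ∀ y ∈ q, E x y → Matrix.single x y (1:ℂ) ∈ A := by
    intro x hx y hy hxy
    apply NonUnitalStarAlgebra.subset_adjoin
    exact ⟨Matrix.single x y 1, Submodule.subset_span ⟨x, y, hxy, rfl⟩,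
      diagProj_mul_stdBasis q hx hy⟩
  have key : ∀ x ∈ q, ∀ y ∈ q, Matrix.single x y (1:ℂ) ∈ A := by
    intro x hx y hy
    have key0 : ∀ z, Relation.ReflTransGen
        (fun a b => a ∈ q ∧ b ∈ q ∧ (E a b ∨ E b a)) x z →
        Matrix.single x z (1:ℂ) ∈ A := by
      intro z hz
      induction hz with
      | refl => exact hgen x hx x hx (hErefl x)
      | @tail b c hxb hbc ih =>
        obtain ⟨hbq, hcq, hE⟩ := hbc
        have hbc' : Matrix.single b c (1:ℂ) ∈ A := by
          rcases hE with h | h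
          · exact hgen b hbq c hcq h
          · have := star_mem (hgen c hcq b hbq h)
            rwa [star_stdBasisMatrix] at this
        have := mul_mem ih hbc'
        rwa [Matrix.single_mul_single_same, one_mul] at this
    exact key0 y (hconn x hx y hy)
  apply Set.Subset.antisymm
  · have hle : A ≤ cornerSubalg q := by
      rw [NonUnitalStarAlgebra.adjoin_le_iff]
      rintro _ ⟨a, -, rfl⟩
      show Q * (Q * a * Q) * Q = Q * a * Q
      rw [← Matrix.mul_assoc, ← Matrix.mul_assoc, diagProj_mul_diagProj,
        Matrix.mul_assoc, diagProj_mul_diagProj]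
    intro z hz
    have := hle hz
    exact ⟨z, Set.mem_univ z, this⟩
  · rintro _ ⟨x, -, rfl⟩
    show Q * x * Q ∈ A
    rw [corner_eq_sum]
    apply sum_mem
    intro i hi
    apply sum_mem
    intro j hj
    exact SMulMemClass.smul_mem _ (key i hi j hj)

/-- The elementary-compression-shaped linear map determined by a set of rows/columns `q`
and a relabelling `ρ`. -/
def compLM (q : Finset ι) (ρ : ι → κ) : Matrix ι ι ℂ →ₗ[ℂ] Matrix κ κ ℂ where
  toFun a := ∑ i ∈ q, ∑ j ∈ q, a i j • Matrix.single (ρ i) (ρ j) 1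
  map_add' a b := by
    simp [Matrix.add_apply, add_smul, Finset.sum_add_distrib]
  map_smul' c a := by
    simp [Matrix.smul_apply, smul_smul, Finset.smul_sum]

lemma compLM_apply (q : Finset ι) (ρ : ι → κ) (a : Matrix ι ι ℂ) :
    compLM q ρ a = ∑ i ∈ q, ∑ j ∈ q, a i j • Matrix.single (ρ i) (ρ j) 1 := rfl

end Helpers

/-- Proposition 8: The composition of two elementary compression type maps between
digraph algebras is of compression type, being a direct sum of elementary compression type maps
associated with pairs of pairwise orthogonal diagonal subprojections of `Q^G` and of `P^F`. -/
theorem comp_of_elemCompressions (n m r : ℕ)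
    (E : Fin n → Fin n → Prop) (F : Fin m → Fin m → Prop) (D : Fin r → Fin r → Prop)
    (hErefl : Reflexive E) (hEtrans : Transitive E)
    (hFrefl : Reflexive F) (hFtrans : Transitive F)
    (hDrefl : Reflexive D) (hDtrans : Transitive D)
    (γ : Matrix (Fin n) (Fin n) ℂ →ₗ[ℂ] Matrix (Fin m) (Fin m) ℂ)
    (η : Matrix (Fin m) (Fin m) ℂ →ₗ[ℂ] Matrix (Fin r) (Fin r) ℂ)
    (QG : Finset (Fin n)) (PH : Finset (Fin m)) (QH : Finset (Fin m)) (PF : Finset (Fin r))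
    (hγ : IsElemCompression E F γ QG PH)
    (hη : IsElemCompression F D η QH PF) :
    ∃ (s : ℕ) (δ : Fin s → (Matrix (Fin n) (Fin n) ℂ →ₗ[ℂ] Matrix (Fin r) (Fin r) ℂ))
      (q : Fin s → Finset (Fin n)) (p : Fin s → Finset (Fin r)),
      (∀ i, IsElemCompression E D (δ i) (q i) (p i)) ∧
      (∀ i j, i ≠ j → Disjoint (q i) (q j)) ∧ (∀ i, q i ⊆ QG) ∧
      (∀ i j, i ≠ j → Disjoint (p i) (p j)) ∧ (∀ i, p i ⊆ PF) ∧
      (∀ a ∈ digraphSpace E, η (γ a) = ∑ i, δ i a) := by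
  classical
  obtain ⟨hQGirr, hγmap, θ, hθinj, hθmem, hθsurj, hγf⟩ := hγ
  obtain ⟨hQHirr, hηmap, ψ, hψinj, hψmem, hψsurj, hηf⟩ := hη
  set ρ : Fin n → Fin r := fun i => ψ (θ i) with hρ
  set q0 : Finset (Fin n) := QG.filter (fun i => θ i ∈ QH) with hq0
  have hq0mem : ∀ {i}, i ∈ q0 ↔ i ∈ QG ∧ θ i ∈ QH := by
    intro i; simp [hq0, Finset.mem_filter]
  have hq0sub : q0 ⊆ QG := Finset.filter_subset _ _
  set R : Fin n → Fin n → Prop := fun a b => a ∈ q0 ∧ b ∈ q0 ∧ (E a b ∨ E b a) with hR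
  have hRmem : ∀ {a b}, R a b → a ∈ q0 ∧ b ∈ q0 ∧ (E a b ∨ E b a) := fun h => h
  have hRsymm : Symmetric R := by
    intro a b h
    exact ⟨h.2.1, h.1, h.2.2.symm⟩
  have hRTGsymm : Symmetric (Relation.ReflTransGen R) := by
    haveI : Std.Symm R := ⟨fun a b h => hRsymm h⟩
    intro a b h; exact Std.Symm.symm a b h
  set C : Fin n → Finset (Fin n) := fun i => q0.filter (Relation.ReflTransGen R i) with hC
  have hmemC : ∀ {i j}, j ∈ C i ↔ j ∈ q0 ∧ Relation.ReflTransGen R i j := by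
    intro i j; simp [hC, Finset.mem_filter]
  have hCsub : ∀ i, C i ⊆ q0 := fun i => Finset.filter_subset _ _
  have hCself : ∀ {i}, i ∈ q0 → i ∈ C i := fun h => hmemC.mpr ⟨h, Relation.ReflTransGen.refl⟩
  have hCeq : ∀ {i j}, j ∈ C i → C i = C j := by
    intro i j hj
    obtain ⟨hjq, hij⟩ := hmemC.mp hj
    ext x
    rw [hmemC, hmemC]
    constructor
    · rintro ⟨hx, hix⟩; exact ⟨hx, Relation.ReflTransGen.trans (hRTGsymm hij) hix⟩
    · rintro ⟨hx, hjx⟩; exact ⟨hx, Relation.ReflTransGen.trans hij hjx⟩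
  -- the key relations
  have hF : ∀ k l, E k l → k ∈ QG → l ∈ QG → F (θ k) (θ l) := by
    intro k l hkl hkG hlG
    have hγe : γ (Matrix.single k l 1) = Matrix.single (θ k) (θ l) 1 := by
      rw [hγf _ (stdBasisMatrix_mem_digraphSpace E hkl),
        sum_stdBasis_apply_smul QG k l (fun i j => Matrix.single (θ i) (θ j) 1),
        if_pos ⟨hkG, hlG⟩]
    by_contra hnF
    have h0 := mem_digraphSpace_apply F
      (hγmap _ (stdBasisMatrix_mem_digraphSpace E hkl)) hnF
    rw [hγe, Matrix.single_apply_same] at h0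
    exact one_ne_zero h0
  have hD : ∀ k l, E k l → k ∈ q0 → l ∈ q0 → D (ρ k) (ρ l) := by
    intro k l hkl hk0 hl0
    obtain ⟨hkG, hkH⟩ := hq0mem.mp hk0
    obtain ⟨hlG, hlH⟩ := hq0mem.mp hl0
    have hηe : η (Matrix.single (θ k) (θ l) 1)
        = Matrix.single (ρ k) (ρ l) 1 := by
      rw [hηf _ (stdBasisMatrix_mem_digraphSpace F (hF k l hkl hkG hlG)),
        sum_stdBasis_apply_smul QH (θ k) (θ l)
          (fun i j => Matrix.single (ψ i) (ψ j) 1),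
        if_pos ⟨hkH, hlH⟩]
    by_contra hnD
    have h0 := mem_digraphSpace_apply D
      (hηmap _ (stdBasisMatrix_mem_digraphSpace F (hF k l hkl hkG hlG))) hnD
    rw [hηe, Matrix.single_apply_same] at h0
    exact one_ne_zero h0
  set 𝒞 : Finset (Finset (Fin n)) := q0.image C with h𝒞
  set s := 𝒞.card with hs
  set e : Fin s ≃ {x // x ∈ 𝒞} := 𝒞.equivFin.symm with he
  set q : Fin s → Finset (Fin n) := fun t => (e t).1 with hq
  set δ : Fin s → (Matrix (Fin n) (Fin n) ℂ →ₗ[ℂ] Matrix (Fin r) (Fin r) ℂ) :=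
    fun t => compLM (q t) ρ with hδ
  set p : Fin s → Finset (Fin r) := fun t => (q t).image ρ with hp
  have hqrep : ∀ t, ∃ i ∈ q0, C i = q t := by
    intro t
    exact Finset.mem_image.mp (e t).2
  have hqsub0 : ∀ t, q t ⊆ q0 := by
    intro t
    obtain ⟨i, hi, hCi⟩ := hqrep t
    rw [← hCi]
    exact hCsub i
  have hqinj : ∀ t t', t ≠ t' → q t ≠ q t' := by
    intro t t' hne hqe
    exact hne (e.injective (Subtype.ext hqe))
  have hqdisj : ∀ t t', t ≠ t' → Disjoint (q t) (q t') := by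
    intro t t' hne
    rw [Finset.disjoint_left]
    intro x hx hx'
    obtain ⟨i, hi, hCi⟩ := hqrep t
    obtain ⟨i', hi', hCi'⟩ := hqrep t'
    have h1 : C i = C x := hCeq (by rw [hCi]; exact hx)
    have h2 : C i' = C x := hCeq (by rw [hCi']; exact hx')
    exact hqinj t t' hne (by rw [← hCi, ← hCi', h1, h2])
  have hρinj : Set.InjOn ρ ↑q0 := by
    intro x hx y hy hxy
    have hx' := hq0mem.mp hx
    have hy' := hq0mem.mp hy
    exact hθinj (Finset.mem_coe.mpr hx'.1) (Finset.mem_coe.mpr hy'.1)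
      (hψinj (Finset.mem_coe.mpr hx'.2) (Finset.mem_coe.mpr hy'.2) hxy)
  have hδe : ∀ t (k l : Fin n), δ t (Matrix.single k l 1)
      = if k ∈ q t ∧ l ∈ q t then Matrix.single (ρ k) (ρ l) 1 else 0 := by
    intro t k l
    rw [hδ]
    show compLM (q t) ρ _ = _
    rw [compLM_apply]
    exact sum_stdBasis_apply_smul (q t) k l (fun i j => Matrix.single (ρ i) (ρ j) 1)
  refine ⟨s, δ, q, p, ?_, hqdisj, fun t => (hqsub0 t).trans hq0sub, ?_, ?_, ?_⟩
  · -- each δ t is an elementary compression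
    intro t
    obtain ⟨i0, hi0, hCi0⟩ := hqrep t
    have hrestrict : ∀ z, Relation.ReflTransGen R i0 z →
        Relation.ReflTransGen (fun a b => a ∈ q t ∧ b ∈ q t ∧ (E a b ∨ E b a)) i0 z := by
      intro z hz
      induction hz with
      | refl => exact Relation.ReflTransGen.refl
      | @tail b c hxb hbc ih =>
        have hb : b ∈ q t := by
          rw [← hCi0]; exact hmemC.mpr ⟨(hRmem hbc).1, hxb⟩
        have hc : c ∈ q t := by
          rw [← hCi0]
          exact hmemC.mpr ⟨(hRmem hbc).2.1, Relation.ReflTransGen.tail hxb hbc⟩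
        exact Relation.ReflTransGen.tail ih ⟨hb, hc, (hRmem hbc).2.2⟩
    refine ⟨?_, ?_, ρ, ?_, ?_, ?_, ?_⟩
    · apply irreducibleProj_of_connected E hErefl
      intro x hx y hy
      have hx' := hmemC.mp (by rw [hCi0]; exact hx)
      have hy' := hmemC.mp (by rw [hCi0]; exact hy)
      have hsymm : Symmetric (fun a b => a ∈ q t ∧ b ∈ q t ∧ (E a b ∨ E b a)) := by
        intro a b h; exact ⟨h.2.1, h.1, h.2.2.symm⟩
      exact Relation.ReflTransGen.trans
        (by
          haveI : Std.Symm (fun a b => a ∈ q t ∧ b ∈ q t ∧ (E a b ∨ E b a)) :=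
            ⟨fun a b h => hsymm h⟩
          exact Std.Symm.symm _ _ (hrestrict x hx'.2))
        (hrestrict y hy'.2)
    · intro a ha
      induction ha using Submodule.span_induction with
      | mem x hx =>
        obtain ⟨k, l, hkl, rfl⟩ := hx
        rw [hδe]
        split_ifs with h
        · exact stdBasisMatrix_mem_digraphSpace D
            (hD k l hkl (hqsub0 t h.1) (hqsub0 t h.2))
        · exact Submodule.zero_mem _
      | zero => rw [map_zero]; exact Submodule.zero_mem _
      | add x y _ _ hx hy => rw [map_add]; exact Submodule.add_mem _ hx hy
      | smul c x _ hx => rw [_root_.map_smul]; exact Submodule.smul_mem _ _ hx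
    · exact hρinj.mono (Finset.coe_subset.mpr (hqsub0 t))
    · intro i hi
      exact Finset.mem_image_of_mem ρ hi
    · intro k hk
      exact Finset.mem_image.mp hk
    · intro a ha
      rfl
  · -- the p t are pairwise disjoint
    intro t t' hne
    rw [Finset.disjoint_left]
    rintro x hx hx'
    obtain ⟨a, ha, rfl⟩ := Finset.mem_image.mp hx
    obtain ⟨b, hb, hab⟩ := Finset.mem_image.mp hx'
    have := hρinj (hqsub0 t' hb) (hqsub0 t ha) hab
    subst this
    exact Finset.disjoint_left.mp (hqdisj t t' hne) ha hb
  · -- p t ⊆ PF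
    intro t x hx
    obtain ⟨a, ha, rfl⟩ := Finset.mem_image.mp hx
    exact hψmem _ (hq0mem.mp (hqsub0 t ha)).2
  · -- the sum formula
    intro a ha
    induction ha using Submodule.span_induction with
    | mem x hx =>
      obtain ⟨k, l, hkl, rfl⟩ := hx
      have hγe : γ (Matrix.single k l 1)
          = if k ∈ QG ∧ l ∈ QG then Matrix.single (θ k) (θ l) 1 else 0 := by
        rw [hγf _ (stdBasisMatrix_mem_digraphSpace E hkl)]
        exact sum_stdBasis_apply_smul QG k l
          (fun i j => Matrix.single (θ i) (θ j) 1)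
      by_cases h0 : k ∈ q0 ∧ l ∈ q0
      · obtain ⟨hk0, hl0⟩ := h0
        obtain ⟨hkG, hkH⟩ := hq0mem.mp hk0
        obtain ⟨hlG, hlH⟩ := hq0mem.mp hl0
        have hLHS : η (γ (Matrix.single k l 1))
            = Matrix.single (ρ k) (ρ l) 1 := by
          rw [hγe, if_pos ⟨hkG, hlG⟩,
            hηf _ (stdBasisMatrix_mem_digraphSpace F (hF k l hkl hkG hlG)),
            sum_stdBasis_apply_smul QH (θ k) (θ l)
              (fun i j => Matrix.single (ψ i) (ψ j) 1),
            if_pos ⟨hkH, hlH⟩]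
        set t0 : Fin s := e.symm ⟨C k, Finset.mem_image_of_mem C hk0⟩ with ht0
        have hqt0 : q t0 = C k := by
          rw [hq, ht0]
          show (e (e.symm ⟨C k, _⟩)).1 = C k
          rw [Equiv.apply_symm_apply]
        have hkt0 : k ∈ q t0 := by rw [hqt0]; exact hCself hk0
        have hlt0 : l ∈ q t0 := by
          rw [hqt0]
          exact hmemC.mpr ⟨hl0, Relation.ReflTransGen.single ⟨hk0, hl0, Or.inl hkl⟩⟩
        rw [hLHS, Finset.sum_eq_single_of_mem t0 (Finset.mem_univ t0)]
        · rw [hδe, if_pos ⟨hkt0, hlt0⟩]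
        · intro t _ hne
          rw [hδe]
          apply if_neg
          rintro ⟨hkt, -⟩
          obtain ⟨i, hi, hCi⟩ := hqrep t
          have : C i = C k := hCeq (by rw [hCi]; exact hkt)
          exact hqinj t t0 hne (by rw [← hCi, this, ← hqt0])
      · have hRHS : ∑ t, δ t (Matrix.single k l 1) = 0 := by
          apply Finset.sum_eq_zero
          intro t _
          rw [hδe]
          apply if_neg
          rintro ⟨hkt, hlt⟩
          exact h0 ⟨hqsub0 t hkt, hqsub0 t hlt⟩
        rw [hRHS]
        by_cases hG : k ∈ QG ∧ l ∈ QG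
        · have hH : ¬ (θ k ∈ QH ∧ θ l ∈ QH) := by
            rintro ⟨hkH, hlH⟩
            exact h0 ⟨hq0mem.mpr ⟨hG.1, hkH⟩, hq0mem.mpr ⟨hG.2, hlH⟩⟩
          rw [hγe, if_pos hG,
            hηf _ (stdBasisMatrix_mem_digraphSpace F (hF k l hkl hG.1 hG.2)),
            sum_stdBasis_apply_smul QH (θ k) (θ l)
              (fun i j => Matrix.single (ψ i) (ψ j) 1),
            if_neg hH]
        · rw [hγe, if_neg hG, map_zero]
    | zero => simp
    | add x y _ _ hx hy =>
      rw [map_add, map_add, hx, hy, ← Finset.sum_add_distrib]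
      simp [map_add]
    | smul c x _ hx =>
      rw [_root_.map_smul, _root_.map_smul, hx, Finset.smul_sum]
      simp_rw [_root_.map_smul]
end
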